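/- arXiv:2206.04623 — 8 statements merged into one kernel-verified Lean document; each statement's English description precedes it below -/
import Mathlib

section
/- Let Φ be the excitation-damping map determined by (φ, ω, B, γ). Then Φ is an invertible linear map on B(H) if and only if γ ≠ 0, φ is invertible as a linear map on B(H_e), and B is an invertible operator. In that case, for every X ∈ B(H), Φ⁻¹(X) = [[φ⁻¹(X_ee), B⁻¹ X_eg],[X_ge (B†)⁻¹, γ⁻¹(X_gg − ω(φ⁻¹(X_ee)))]]. -/
open Matrix ComplexOrder
noncomputable section

/-- `Λ ⊗ id_n` applied blockwise/entrywise: for linear `Λ` this is the tensor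
product of `Λ` with the identity map on `n × n` matrices. -/
def tensorAux {a b : Type*} (Λ : Matrix a a ℂ → Matrix b b ℂ) (n : ℕ)
    (M : Matrix (a × Fin n) (a × Fin n) ℂ) : Matrix (b × Fin n) (b × Fin n) ℂ :=
  fun p q => Λ (fun i j => M (i, p.2) (j, q.2)) p.1 q.1

/-- A map between matrix algebras is completely positive if `Λ ⊗ id_n` maps positive
semidefinite matrices to positive semidefinite matrices, for every `n`. -/
def IsCompletelyPositive {a b : Type*} [Fintype a] [Fintype b]
    (Λ : Matrix a a ℂ → Matrix b b ℂ) : Prop :=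
  ∀ (n : ℕ) (M : Matrix (a × Fin n) (a × Fin n) ℂ), M.PosSemidef → (tensorAux Λ n M).PosSemidef

/-- A map between matrix algebras is positive if it maps positive semidefinite
matrices to positive semidefinite matrices. -/
def IsPositiveMap {a b : Type*} [Fintype a] [Fintype b]
    (Λ : Matrix a a ℂ → Matrix b b ℂ) : Prop :=
  ∀ M : Matrix a a ℂ, M.PosSemidef → (Λ M).PosSemidef

/-- The excitation-damping map determined by `(φ, ω, B, γ)`:
`Φ(X) = [[φ(X_ee), B X_eg],[X_ge B†, γ X_gg + ω(X_ee)]]`. -/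
def EDMap {de dg : ℕ} (φ : Matrix (Fin de) (Fin de) ℂ → Matrix (Fin de) (Fin de) ℂ)
    (ω : Matrix (Fin de) (Fin de) ℂ → Matrix (Fin dg) (Fin dg) ℂ)
    (B : Matrix (Fin de) (Fin de) ℂ) (γ : ℝ) :
    Matrix (Fin de ⊕ Fin dg) (Fin de ⊕ Fin dg) ℂ →
      Matrix (Fin de ⊕ Fin dg) (Fin de ⊕ Fin dg) ℂ :=
  fun X => fromBlocks (φ X.toBlocks₁₁) (B * X.toBlocks₁₂) (X.toBlocks₂₁ * Bᴴ)
    ((γ : ℂ) • X.toBlocks₂₂ + ω X.toBlocks₁₁)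

/-- The candidate inverse of an excitation-damping map: given an inverse `ψ` of `φ`,
`Φ⁻¹(X) = [[φ⁻¹(X_ee), B⁻¹ X_eg],[X_ge (B†)⁻¹, γ⁻¹ (X_gg − ω(φ⁻¹(X_ee)))]]`. -/
def EDInv {de dg : ℕ} (ψ : Matrix (Fin de) (Fin de) ℂ → Matrix (Fin de) (Fin de) ℂ)
    (ω : Matrix (Fin de) (Fin de) ℂ → Matrix (Fin dg) (Fin dg) ℂ)
    (B : Matrix (Fin de) (Fin de) ℂ) (γ : ℝ) :
    Matrix (Fin de ⊕ Fin dg) (Fin de ⊕ Fin dg) ℂ →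
      Matrix (Fin de ⊕ Fin dg) (Fin de ⊕ Fin dg) ℂ :=
  fun X => fromBlocks (ψ X.toBlocks₁₁) (B⁻¹ * X.toBlocks₁₂) (X.toBlocks₂₁ * (B⁻¹)ᴴ)
    (((γ : ℂ))⁻¹ • (X.toBlocks₂₂ - ω (ψ X.toBlocks₁₁)))

lemma ed_inverses {de dg : ℕ}
    (φ : Matrix (Fin de) (Fin de) ℂ →ₗ[ℂ] Matrix (Fin de) (Fin de) ℂ)
    (ω : Matrix (Fin de) (Fin de) ℂ →ₗ[ℂ] Matrix (Fin dg) (Fin dg) ℂ)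
    (B : Matrix (Fin de) (Fin de) ℂ) (γ : ℝ)
    (hγ : γ ≠ 0) (hB : IsUnit B)
    (ψ : Matrix (Fin de) (Fin de) ℂ → Matrix (Fin de) (Fin de) ℂ)
    (hl : Function.LeftInverse ψ ⇑φ) (hr : Function.RightInverse ψ ⇑φ) :
    Function.LeftInverse (EDInv ψ ⇑ω B γ) (EDMap ⇑φ ⇑ω B γ) ∧
    Function.RightInverse (EDInv ψ ⇑ω B γ) (EDMap ⇑φ ⇑ω B γ) := by
  have hdet : IsUnit B.det := (Matrix.isUnit_iff_isUnit_det B).mp hB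
  have hdetH : IsUnit (Bᴴ).det := by
    rw [Matrix.det_conjTranspose]
    exact hdet.star
  have h1 : B⁻¹ * B = 1 := Matrix.nonsing_inv_mul B hdet
  have h2 : B * B⁻¹ = 1 := Matrix.mul_nonsing_inv B hdet
  have h3 : Bᴴ * (B⁻¹)ᴴ = 1 := by
    rw [Matrix.conjTranspose_nonsing_inv]
    exact Matrix.mul_nonsing_inv _ hdetH
  have h4 : (B⁻¹)ᴴ * Bᴴ = 1 := by
    rw [Matrix.conjTranspose_nonsing_inv]
    exact Matrix.nonsing_inv_mul _ hdetH
  have hγc : (γ : ℂ) ≠ 0 := by exact_mod_cast hγ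
  constructor
  · intro X
    unfold EDMap EDInv
    simp only [Matrix.toBlocks_fromBlocks₁₁, Matrix.toBlocks_fromBlocks₁₂,
      Matrix.toBlocks_fromBlocks₂₁, Matrix.toBlocks_fromBlocks₂₂]
    rw [hl X.toBlocks₁₁, ← Matrix.mul_assoc, h1, Matrix.one_mul, Matrix.mul_assoc, h3,
      Matrix.mul_one, add_sub_cancel_right, smul_smul, inv_mul_cancel₀ hγc, one_smul]
    exact Matrix.fromBlocks_toBlocks X
  · intro X
    unfold EDMap EDInv
    simp only [Matrix.toBlocks_fromBlocks₁₁, Matrix.toBlocks_fromBlocks₁₂,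
      Matrix.toBlocks_fromBlocks₂₁, Matrix.toBlocks_fromBlocks₂₂]
    rw [hr X.toBlocks₁₁, ← Matrix.mul_assoc, h2, Matrix.one_mul, Matrix.mul_assoc, h4,
      Matrix.mul_one, smul_smul, mul_inv_cancel₀ hγc, one_smul, sub_add_cancel]
    exact Matrix.fromBlocks_toBlocks X

/-- `Φ` is an invertible linear map on `B(H)` iff `γ ≠ 0`, `φ` is invertible
and `B` is invertible; in that case `Φ⁻¹` is given by the explicit block formula. -/
theorem stmt_0 {de dg : ℕ} (hde : 0 < de) (hdg : 0 < dg)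
    (φ : Matrix (Fin de) (Fin de) ℂ →ₗ[ℂ] Matrix (Fin de) (Fin de) ℂ)
    (ω : Matrix (Fin de) (Fin de) ℂ →ₗ[ℂ] Matrix (Fin dg) (Fin dg) ℂ)
    (B : Matrix (Fin de) (Fin de) ℂ) (γ : ℝ) (hγ : 0 ≤ γ) :
    (Function.Bijective (EDMap ⇑φ ⇑ω B γ) ↔
      (γ ≠ 0 ∧ Function.Bijective ⇑φ ∧ IsUnit B)) ∧
    (γ ≠ 0 → Function.Bijective ⇑φ → IsUnit B →
      ∀ ψ : Matrix (Fin de) (Fin de) ℂ → Matrix (Fin de) (Fin de) ℂ,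
        Function.LeftInverse ψ ⇑φ → Function.RightInverse ψ ⇑φ →
        Function.LeftInverse (EDInv ψ ⇑ω B γ) (EDMap ⇑φ ⇑ω B γ) ∧
        Function.RightInverse (EDInv ψ ⇑ω B γ) (EDMap ⇑φ ⇑ω B γ)) := by
  have e11 : (0 : Matrix (Fin de ⊕ Fin dg) (Fin de ⊕ Fin dg) ℂ).toBlocks₁₁ = 0 := rfl
  have e12 : (0 : Matrix (Fin de ⊕ Fin dg) (Fin de ⊕ Fin dg) ℂ).toBlocks₁₂ = 0 := rfl
  have e21 : (0 : Matrix (Fin de ⊕ Fin dg) (Fin de ⊕ Fin dg) ℂ).toBlocks₂₁ = 0 := rfl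
  have e22 : (0 : Matrix (Fin de ⊕ Fin dg) (Fin de ⊕ Fin dg) ℂ).toBlocks₂₂ = 0 := rfl
  have hzero : EDMap ⇑φ ⇑ω B γ 0 = 0 := by
    unfold EDMap
    rw [e11, e12, e21, e22, map_zero, map_zero, Matrix.mul_zero, Matrix.zero_mul,
      smul_zero, add_zero, Matrix.fromBlocks_zero]
  constructor
  · constructor
    · intro hbij
      refine ⟨?_, ?_, ?_⟩
      · -- γ ≠ 0
        intro h0
        have key : EDMap ⇑φ ⇑ω B γ (Matrix.fromBlocks 0 0 0 1) = 0 := by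
          unfold EDMap
          simp only [Matrix.toBlocks_fromBlocks₁₁, Matrix.toBlocks_fromBlocks₁₂,
            Matrix.toBlocks_fromBlocks₂₁, Matrix.toBlocks_fromBlocks₂₂,
            map_zero, Matrix.mul_zero, Matrix.zero_mul, h0, Complex.ofReal_zero, zero_smul,
            add_zero, Matrix.fromBlocks_zero]
        have := hbij.1 (key.trans hzero.symm)
        have h1 : (Matrix.fromBlocks (0 : Matrix (Fin de) (Fin de) ℂ) 0 0
            (1 : Matrix (Fin dg) (Fin dg) ℂ)) (Sum.inr ⟨0, hdg⟩) (Sum.inr ⟨0, hdg⟩) = 0 := by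
          rw [this]; rfl
        simp [Matrix.fromBlocks, Matrix.one_apply] at h1
      · -- φ bijective
        have hsurj : Function.Surjective ⇑φ := by
          intro A
          obtain ⟨X, hX⟩ := hbij.2 (Matrix.fromBlocks A 0 0 0)
          refine ⟨X.toBlocks₁₁, ?_⟩
          have := congrArg Matrix.toBlocks₁₁ hX
          simpa [EDMap, Matrix.toBlocks_fromBlocks₁₁] using this
        exact ⟨(LinearMap.injective_iff_surjective).mpr hsurj, hsurj⟩
      · -- IsUnit B
        set j0 : Fin dg := ⟨0, hdg⟩
        have hex : ∀ k : Fin de, ∃ N : Matrix (Fin de) (Fin dg) ℂ,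
            B * N = Matrix.single k j0 1 := by
          intro k
          obtain ⟨X, hX⟩ := hbij.2 (Matrix.fromBlocks 0 (Matrix.single k j0 1) 0 0)
          refine ⟨X.toBlocks₁₂, ?_⟩
          have := congrArg Matrix.toBlocks₁₂ hX
          simpa [EDMap, Matrix.toBlocks_fromBlocks₁₂] using this
        choose N hN using hex
        refine (Matrix.isUnit_iff_isUnit_det B).mpr (Matrix.isUnit_det_of_right_inverse (B := Matrix.of fun i k => N k i j0) ?_)
        ext i k
        have := congrFun (congrFun (hN k) i) j0
        simp only [Matrix.mul_apply, Matrix.of_apply] at this ⊢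
        rw [this]
        simp [Matrix.single, Matrix.one_apply, eq_comm]
    · rintro ⟨hγ0, hφ, hB⟩
      set e := LinearEquiv.ofBijective φ hφ
      have h := ed_inverses φ ω B γ hγ0 hB (⇑e.symm)
        (fun x => e.symm_apply_apply x) (fun x => e.apply_symm_apply x)
      exact Function.bijective_iff_has_inverse.mpr ⟨_, h.1, h.2⟩
  · intro hγ0 hφ hB ψ hl hr
    exact ed_inverses φ ω B γ hγ0 hB ψ hl hr
end
end

section
/- Let Φ be the excitation-damping map determined by (φ, ω, B, γ). Then Φ is completely positive if and only if ω is completely positive and there exist r ≤ d_e², operators A_1, …, A_r ∈ B(H_e) and scalars β_1, …, β_r ∈ ℂ such that φ(X) = Σ_{μ=1}^r A_μ X A_μ† for all X ∈ B(H_e), B = Σ_{μ=1}^r β_μ A_μ, and Σ_{μ=1}^r |β_μ|² ≤ γ. -/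
open Matrix ComplexOrder
noncomputable section

set_option linter.unusedSectionVars false

variable {a b c : Type*} [Fintype a] [Fintype b] [Fintype c] [DecidableEq a] [DecidableEq b] [DecidableEq c]

def kron (K : Matrix b a ℂ) (n : ℕ) : Matrix (b × Fin n) (a × Fin n) ℂ :=
  Matrix.of fun p q => if p.2 = q.2 then K p.1 q.1 else 0

lemma cp_conj (K : Matrix b a ℂ) : IsCompletelyPositive (fun X : Matrix a a ℂ => K * X * Kᴴ) := by
  intro n M hM
  have h : tensorAux (fun X : Matrix a a ℂ => K * X * Kᴴ) n M = kron K n * M * (kron K n)ᴴ := by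
    ext ⟨i, m⟩ ⟨j, m'⟩
    simp only [tensorAux, Matrix.mul_apply, Matrix.conjTranspose_apply, Matrix.of_apply, kron,
      Fintype.sum_prod_type, ite_mul, mul_ite, zero_mul, mul_zero, apply_ite (star : ℂ → ℂ), star_zero,
      map_zero, Finset.sum_ite_eq', Finset.sum_ite_eq, Finset.mem_univ, if_true]
    rfl
  rw [h]
  exact hM.mul_mul_conjTranspose_same _

lemma cp_comp {Λ₁ : Matrix a a ℂ → Matrix b b ℂ} {Λ₂ : Matrix b b ℂ → Matrix c c ℂ}
    (h₁ : IsCompletelyPositive Λ₁) (h₂ : IsCompletelyPositive Λ₂) :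
    IsCompletelyPositive (fun X => Λ₂ (Λ₁ X)) := fun n M hM => h₂ n _ (h₁ n M hM)

lemma cp_add {Λ₁ Λ₂ : Matrix a a ℂ → Matrix b b ℂ}
    (h₁ : IsCompletelyPositive Λ₁) (h₂ : IsCompletelyPositive Λ₂) :
    IsCompletelyPositive (fun X => Λ₁ X + Λ₂ X) :=
  fun n M hM => (h₁ n M hM).add (h₂ n M hM)

lemma cp_sum {ι : Type*} [DecidableEq ι] (s : Finset ι) (f : ι → (Matrix a a ℂ → Matrix b b ℂ))
    (h : ∀ i ∈ s, IsCompletelyPositive (f i)) :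
    IsCompletelyPositive (fun X => ∑ i ∈ s, f i X) := by
  induction s using Finset.cons_induction with
  | empty =>
      intro n M hM
      have h0 : tensorAux (fun _ : Matrix a a ℂ => (0 : Matrix b b ℂ)) n M = 0 := rfl
      simpa [h0] using Matrix.PosSemidef.zero (n := b × Fin n) (R := ℂ)
  | cons i s hi ih =>
      simp only [Finset.sum_cons]
      exact cp_add (h i (Finset.mem_cons_self i s)) (ih fun j hj => h j (Finset.mem_cons_of_mem hj))

variable {de dg : ℕ}

lemma cp_blocks11 :
    IsCompletelyPositive (fun X : Matrix (Fin de ⊕ Fin dg) (Fin de ⊕ Fin dg) ℂ => X.toBlocks₁₁) := by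
  intro n M hM
  exact hM.submatrix (fun p : Fin de × Fin n => ((Sum.inl p.1 : Fin de ⊕ Fin dg), p.2))

lemma cp_blocks22 :
    IsCompletelyPositive (fun X : Matrix (Fin de ⊕ Fin dg) (Fin de ⊕ Fin dg) ℂ => X.toBlocks₂₂) := by
  intro n M hM
  exact hM.submatrix (fun p : Fin dg × Fin n => ((Sum.inr p.1 : Fin de ⊕ Fin dg), p.2))

def Je (de dg : ℕ) : Matrix (Fin de ⊕ Fin dg) (Fin de) ℂ :=
  Matrix.of fun p i => if p = Sum.inl i then 1 else 0

def Jg (de dg : ℕ) : Matrix (Fin de ⊕ Fin dg) (Fin dg) ℂ :=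
  Matrix.of fun p g => if p = Sum.inr g then 1 else 0

lemma Je_conj (X : Matrix (Fin de) (Fin de) ℂ) :
    Je de dg * X * (Je de dg)ᴴ = fromBlocks X 0 0 0 := by
  ext p q
  cases p <;> cases q <;>
    simp [Je, Matrix.mul_apply, fromBlocks, ite_mul, mul_ite,
      apply_ite (star : ℂ → ℂ)]

lemma Jg_conj (Y : Matrix (Fin dg) (Fin dg) ℂ) :
    Jg de dg * Y * (Jg de dg)ᴴ = fromBlocks 0 0 0 Y := by
  ext p q
  cases p <;> cases q <;>
    simp [Jg, Matrix.mul_apply, fromBlocks, ite_mul, mul_ite,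
      apply_ite (star : ℂ → ℂ)]

lemma fromBlocks_sum {l m n o α ι : Type*} [AddCommMonoid α] (s : Finset ι)
    (f : ι → Matrix n l α) (g : ι → Matrix n m α) (h : ι → Matrix o l α) (k : ι → Matrix o m α) :
    ∑ i ∈ s, fromBlocks (f i) (g i) (h i) (k i) =
      fromBlocks (∑ i ∈ s, f i) (∑ i ∈ s, g i) (∑ i ∈ s, h i) (∑ i ∈ s, k i) := by
  ext p q
  cases p <;> cases q <;> simp [Matrix.sum_apply]

lemma backward (φ : Matrix (Fin de) (Fin de) ℂ →ₗ[ℂ] Matrix (Fin de) (Fin de) ℂ)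
    (ω : Matrix (Fin de) (Fin de) ℂ →ₗ[ℂ] Matrix (Fin dg) (Fin dg) ℂ)
    (B : Matrix (Fin de) (Fin de) ℂ) (γ : ℝ)
    (hω : IsCompletelyPositive ⇑ω) {r : ℕ}
    (A : Fin r → Matrix (Fin de) (Fin de) ℂ) (β : Fin r → ℂ)
    (hφ : ∀ X, φ X = ∑ μ, A μ * X * (A μ)ᴴ)
    (hB : B = ∑ μ, β μ • A μ)
    (hs : ∑ μ, ‖β μ‖ ^ 2 ≤ γ) :
    IsCompletelyPositive (EDMap ⇑φ ⇑ω B γ) := by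
  set s : ℝ := ∑ μ, ‖β μ‖ ^ 2 with hsdef
  set c : ℝ := Real.sqrt (γ - s) with hcdef
  set K : Fin r → Matrix (Fin de ⊕ Fin dg) (Fin de ⊕ Fin dg) ℂ :=
    fun μ => fromBlocks (A μ) 0 0 (star (β μ) • (1 : Matrix (Fin dg) (Fin dg) ℂ)) with hKdef
  set K0 : Matrix (Fin de ⊕ Fin dg) (Fin de ⊕ Fin dg) ℂ :=
    fromBlocks 0 0 0 ((c : ℂ) • (1 : Matrix (Fin dg) (Fin dg) ℂ)) with hK0def
  have key : EDMap ⇑φ ⇑ω B γ = fun X =>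
      (∑ μ, K μ * X * (K μ)ᴴ) +
        ((K0 * X * K0ᴴ) + (Jg de dg * (ω X.toBlocks₁₁) * (Jg de dg)ᴴ)) := by
    funext X
    have hK : ∀ μ, K μ * X * (K μ)ᴴ =
        fromBlocks (A μ * X.toBlocks₁₁ * (A μ)ᴴ) (β μ • (A μ * X.toBlocks₁₂))
          (star (β μ) • (X.toBlocks₂₁ * (A μ)ᴴ)) ((star (β μ) * β μ) • X.toBlocks₂₂) := by
      intro μ
      conv_lhs => rw [← fromBlocks_toBlocks X]
      simp [hKdef, fromBlocks_conjTranspose, fromBlocks_multiply, Matrix.smul_mul,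
        Matrix.mul_smul, smul_smul, mul_comm]
    have hK0 : K0 * X * K0ᴴ = fromBlocks 0 0 0 (((γ : ℂ) - (s : ℂ)) • X.toBlocks₂₂) := by
      conv_lhs => rw [← fromBlocks_toBlocks X]
      have hc2r : c * c = γ - s := Real.mul_self_sqrt (by linarith)
      simp [hK0def, fromBlocks_conjTranspose, fromBlocks_multiply, Matrix.smul_mul,
        Matrix.mul_smul, smul_smul, ← Complex.ofReal_mul, hc2r, Complex.ofReal_sub]
      ext i j
      cases i <;> cases j <;>
        simp [Matrix.smul_apply, Complex.real_smul, Complex.ofReal_sub, fromBlocks]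
    have hzz : ∀ z : ℂ, star z * z = ((‖z‖ ^ 2 : ℝ) : ℂ) := by
      intro z
      rw [Complex.star_def, mul_comm, Complex.mul_conj]
      norm_cast
      simp [Complex.normSq_eq_norm_sq]
    have hstar : ∑ μ, star (β μ) * β μ = ((s : ℝ) : ℂ) := by
      rw [hsdef]
      push_cast
      exact Finset.sum_congr rfl fun μ _ => by rw [hzz (β μ)]; push_cast; ring
    have h1 : φ X.toBlocks₁₁ = ∑ μ, A μ * X.toBlocks₁₁ * (A μ)ᴴ := hφ _
    have h2 : B * X.toBlocks₁₂ = ∑ μ, β μ • (A μ * X.toBlocks₁₂) := by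
      rw [hB, Matrix.sum_mul]
      simp [Matrix.smul_mul]
    have h3 : X.toBlocks₂₁ * Bᴴ = ∑ μ, star (β μ) • (X.toBlocks₂₁ * (A μ)ᴴ) := by
      rw [hB]
      simp only [conjTranspose_sum, conjTranspose_smul, Matrix.mul_sum, Matrix.mul_smul]
    have h4 : (γ : ℂ) • X.toBlocks₂₂ + ω X.toBlocks₁₁ =
        (∑ μ, (star (β μ) * β μ) • X.toBlocks₂₂) +
          (((γ : ℂ) - (s : ℂ)) • X.toBlocks₂₂ + ω X.toBlocks₁₁) := by
      rw [← Finset.sum_smul, hstar, ← add_assoc, ← add_smul]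
      norm_num
    simp only [hK, hK0, Jg_conj, fromBlocks_sum, fromBlocks_add, add_zero, zero_add]
    rw [EDMap]
    rw [h1, h2, h3, h4]
  rw [key]
  exact cp_add (cp_sum Finset.univ _ (fun μ _ => cp_conj (K μ)))
    (cp_add (cp_conj K0) (cp_comp (cp_comp cp_blocks11 hω) (cp_conj (Jg de dg))))

lemma inner_mulVec {k l : Type*} [Fintype k] [Fintype l] (A : Matrix k l ℂ) (x : l → ℂ) (y : k → ℂ) :
    star (A *ᵥ x) ⬝ᵥ y = star x ⬝ᵥ (Aᴴ *ᵥ y) := by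
  rw [Matrix.star_mulVec, Matrix.dotProduct_mulVec]

lemma star_mul_self_c (z : ℂ) : star z * z = ((‖z‖ ^ 2 : ℝ) : ℂ) := by
  rw [Complex.star_def, mul_comm, Complex.mul_conj]
  norm_cast
  simp [Complex.normSq_eq_norm_sq]

lemma dot_star_self {k : Type*} [Fintype k] (x : k → ℂ) :
    star x ⬝ᵥ x = ((∑ i, ‖x i‖ ^ 2 : ℝ) : ℂ) := by
  simp only [dotProduct, Pi.star_apply, star_mul_self_c]
  push_cast
  norm_cast

open scoped MatrixOrder in
lemma psd_eq_ct_mul_self {k : Type*} [Fintype k] [DecidableEq k] {A : Matrix k k ℂ}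
    (h : A.PosSemidef) : ∃ W : Matrix k k ℂ, A = Wᴴ * W := by
  obtain ⟨W, hW⟩ := CStarAlgebra.nonneg_iff_eq_star_mul_self.mp h.nonneg
  exact ⟨W, hW⟩

lemma forward (hde : 0 < de) (hdg : 0 < dg)
    (φ : Matrix (Fin de) (Fin de) ℂ →ₗ[ℂ] Matrix (Fin de) (Fin de) ℂ)
    (ω : Matrix (Fin de) (Fin de) ℂ →ₗ[ℂ] Matrix (Fin dg) (Fin dg) ℂ)
    (B : Matrix (Fin de) (Fin de) ℂ) (γ : ℝ)
    (hΦ : IsCompletelyPositive (EDMap ⇑φ ⇑ω B γ)) :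
    IsCompletelyPositive ⇑ω ∧
      ∃ r : ℕ, r ≤ de ^ 2 ∧
        ∃ (A : Fin r → Matrix (Fin de) (Fin de) ℂ) (β : Fin r → ℂ),
          (∀ X, φ X = ∑ μ, A μ * X * (A μ)ᴴ) ∧
          B = ∑ μ, β μ • A μ ∧
          ∑ μ, ‖β μ‖ ^ 2 ≤ γ := by
  constructor
  · -- ω is CP
    have hcomp := cp_comp (cp_comp (cp_conj (Je de dg)) hΦ)
      (cp_blocks22 (de := de) (dg := dg))
    have heq : (fun X : Matrix (Fin de) (Fin de) ℂ =>
        (EDMap ⇑φ ⇑ω B γ (Je de dg * X * (Je de dg)ᴴ)).toBlocks₂₂) = ⇑ω := by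
      funext X
      rw [Je_conj, EDMap]
      simp
    rwa [heq] at hcomp
  · set g0 : Fin dg := ⟨0, hdg⟩ with hg0
    set n := de + 1 with hn
    set ψ : (Fin de ⊕ Fin dg) × Fin n → ℂ := fun p =>
      Sum.elim (fun i => if p.2 = Fin.castSucc i then 1 else 0)
        (fun g => if g = g0 ∧ p.2 = Fin.last de then 1 else 0) p.1 with hψ
    set M : Matrix ((Fin de ⊕ Fin dg) × Fin n) ((Fin de ⊕ Fin dg) × Fin n) ℂ :=
      Matrix.of fun p q => ψ p * star (ψ q) with hMdef
    have hM : M.PosSemidef := by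
      refine Matrix.posSemidef_iff_dotProduct_mulVec.mpr ⟨?_, ?_⟩
      · ext p q
        simp [hMdef, Matrix.conjTranspose_apply, star_mul', mul_comm]
      · intro x
        have h1 : M *ᵥ x = fun p => ψ p * (∑ q, star (ψ q) * x q) := by
          funext p
          simp [hMdef, Matrix.mulVec, dotProduct, Finset.mul_sum, mul_assoc]
        have h2 : star x ⬝ᵥ (fun p => ψ p * (∑ q, star (ψ q) * x q)) =
            star (∑ q, star (ψ q) * x q) * (∑ q, star (ψ q) * x q) := by
          have h3 : ∑ p, star (x p) * ψ p = star (∑ q, star (ψ q) * x q) := by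
            rw [star_sum]
            exact Finset.sum_congr rfl fun p _ => by simp [star_mul', mul_comm]
          calc star x ⬝ᵥ (fun p => ψ p * (∑ q, star (ψ q) * x q))
              = (∑ p, star (x p) * ψ p) * (∑ q, star (ψ q) * x q) := by
                simp [dotProduct, Finset.sum_mul, mul_assoc]
            _ = _ := by rw [h3]
        rw [h1, h2]
        exact star_mul_self_nonneg _
    set emb : (Fin de × Fin de) ⊕ Unit → (Fin de ⊕ Fin dg) × Fin n :=
      Sum.elim (fun ak => (Sum.inl ak.1, Fin.castSucc ak.2))
        (fun _ => (Sum.inr g0, Fin.last de)) with hembdef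
    set T := (tensorAux (EDMap ⇑φ ⇑ω B γ) n M).submatrix emb emb with hTdef
    have hT : T.PosSemidef := (hΦ n M hM).submatrix emb
    have hT11 : ∀ a k b l, T (Sum.inl (a,k)) (Sum.inl (b,l)) = φ (single k l 1) a b := by
      intro a k b l
      have hY : (Matrix.of fun i j => M (i, Fin.castSucc k) (j, Fin.castSucc l)).toBlocks₁₁
          = (single k l (1:ℂ)) := by
        ext i j
        by_cases hik : k = i <;> by_cases hjl : l = j <;>
          simp [Matrix.toBlocks₁₁, hMdef, hψ, Matrix.single, hik, hjl,
            Fin.castSucc_inj]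
      calc T (Sum.inl (a,k)) (Sum.inl (b,l))
          = φ ((Matrix.of fun i j => M (i, Fin.castSucc k) (j, Fin.castSucc l)).toBlocks₁₁) a b := rfl
        _ = _ := by rw [hY]
    have hT12 : ∀ a k, T (Sum.inl (a,k)) (Sum.inr ()) = B a k := by
      intro a k
      have hY12 : (Matrix.of fun i j => M (i, Fin.castSucc k) (j, Fin.last de)).toBlocks₁₂
          = single k g0 (1:ℂ) := by
        ext i g
        by_cases hik : k = i <;> by_cases hg : g0 = g <;>
          simp [Matrix.toBlocks₁₂, hMdef, hψ, Matrix.single, hik, hg,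
            Fin.castSucc_inj, eq_comm]
      calc T (Sum.inl (a,k)) (Sum.inr ())
          = (B * (Matrix.of fun i j => M (i, Fin.castSucc k) (j, Fin.last de)).toBlocks₁₂) a g0 := rfl
        _ = B a k := by
            rw [hY12, Matrix.mul_apply]
            simp [Matrix.single, mul_ite, mul_one, mul_zero]
    have hT22 : T (Sum.inr ()) (Sum.inr ()) = ((γ:ℝ):ℂ) := by
      have hY0 : (Matrix.of fun i j => M (i, Fin.last de) (j, Fin.last de)).toBlocks₁₁
          = (0 : Matrix (Fin de) (Fin de) ℂ) := by
        ext i j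
        simp [Matrix.toBlocks₁₁, hMdef, hψ, (Fin.castSucc_lt_last i).ne']
      calc T (Sum.inr ()) (Sum.inr ())
          = ((γ:ℂ) • (Matrix.of fun i j => M (i, Fin.last de) (j, Fin.last de)).toBlocks₂₂
              + ω ((Matrix.of fun i j => M (i, Fin.last de) (j, Fin.last de)).toBlocks₁₁)) g0 g0 := rfl
        _ = ((γ:ℝ):ℂ) := by
            rw [hY0, map_zero]
            simp [Matrix.toBlocks₂₂, hMdef, hψ]
    set C : Matrix (Fin de × Fin de) (Fin de × Fin de) ℂ := T.submatrix Sum.inl Sum.inl with hCdef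
    have hCpsd : C.PosSemidef := hT.submatrix _
    obtain ⟨W, hW⟩ := psd_eq_ct_mul_self hCpsd
    obtain ⟨R, hR⟩ := psd_eq_ct_mul_self hT
    set P : Matrix ((Fin de × Fin de) ⊕ Unit) (Fin de × Fin de) ℂ := R.submatrix id Sum.inl with hPdef
    set u : ((Fin de × Fin de) ⊕ Unit) → ℂ := fun ρ => R ρ (Sum.inr ()) with hudef
    set v : (Fin de × Fin de) → ℂ := fun μ => T (Sum.inl μ) (Sum.inr ()) with hvdef
    have hCP : C = Pᴴ * P := by
      ext μ ν
      simp [hCdef, hR, hPdef, Matrix.mul_apply, Matrix.conjTranspose_apply,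
        Matrix.submatrix_apply]
    have hvP : v = Pᴴ *ᵥ u := by
      funext μ
      simp [hvdef, hR, hPdef, hudef, Matrix.mulVec, dotProduct, Matrix.mul_apply,
        Matrix.conjTranspose_apply, Matrix.submatrix_apply]
    have hγu : ((γ:ℝ):ℂ) = star u ⬝ᵥ u := by
      rw [← hT22, hR]
      simp [hudef, Matrix.mul_apply, dotProduct, Matrix.conjTranspose_apply]
    have hle : LinearMap.range (Pᴴ * P).mulVecLin ≤ LinearMap.range (Pᴴ).mulVecLin := by
      rw [Matrix.mulVecLin_mul]
      exact LinearMap.range_comp_le_range _ _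
    have hfr : Module.finrank ℂ (LinearMap.range (Pᴴ * P).mulVecLin) =
        Module.finrank ℂ (LinearMap.range (Pᴴ).mulVecLin) := by
      have h1 : (Pᴴ * P).rank = P.rank := Matrix.rank_conjTranspose_mul_self P
      have h2 : (Pᴴ).rank = P.rank := Matrix.rank_conjTranspose P
      exact h1.trans h2.symm
    have hrange : LinearMap.range (Pᴴ * P).mulVecLin = LinearMap.range (Pᴴ).mulVecLin :=
      Submodule.eq_of_le_of_finrank_eq hle hfr
    have hvmem : v ∈ LinearMap.range (Pᴴ * P).mulVecLin := by
      rw [hrange]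
      exact ⟨u, by rw [Matrix.mulVecLin_apply, ← hvP]⟩
    obtain ⟨w, hw⟩ := hvmem
    rw [Matrix.mulVecLin_apply] at hw
    set β0 : (Fin de × Fin de) → ℂ := W *ᵥ w with hβ0
    have hvW : Wᴴ *ᵥ β0 = v := by
      rw [hβ0, Matrix.mulVec_mulVec, ← hW, hCP]
      exact hw
    set u' : ((Fin de × Fin de) ⊕ Unit) → ℂ := P *ᵥ w with hu'
    have keyu' : Pᴴ *ᵥ u' = v := by
      rw [hu', Matrix.mulVec_mulVec]
      exact hw
    set d : ((Fin de × Fin de) ⊕ Unit) → ℂ := u - u' with hd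
    have hdz : Pᴴ *ᵥ d = 0 := by
      rw [hd, Matrix.mulVec_sub, keyu', ← hvP]
      exact sub_self v
    have cross1 : star u' ⬝ᵥ d = 0 := by
      nth_rewrite 1 [hu']
      rw [inner_mulVec, hdz, dotProduct_zero]
    have cross2 : star d ⬝ᵥ u' = 0 := by
      rw [hu', Matrix.dotProduct_mulVec]
      have hz : star d ᵥ* P = 0 := by
        have h := Matrix.star_mulVec (Pᴴ) d
        rw [hdz, Matrix.conjTranspose_conjTranspose] at h
        simpa using h.symm
      rw [hz, zero_dotProduct]
    have hsplit : star u ⬝ᵥ u = star u' ⬝ᵥ u' + star d ⬝ᵥ d := by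
      have hu_eq : u = u' + d := by
        rw [hd]
        funext ρ
        simp
      rw [hu_eq]
      simp only [star_add, add_dotProduct, dotProduct_add, cross1, cross2]
      ring
    have hval : star β0 ⬝ᵥ β0 = star u' ⬝ᵥ u' := by
      have e1 : star β0 ⬝ᵥ β0 = star w ⬝ᵥ v := by
        nth_rewrite 1 [hβ0]
        rw [inner_mulVec, hvW]
      have e2 : star u' ⬝ᵥ u' = star w ⬝ᵥ v := by
        nth_rewrite 1 [hu']
        rw [inner_mulVec, keyu']
      rw [e1, e2]
    have hd2 : (0:ℝ) ≤ ∑ ρ, ‖d ρ‖ ^ 2 := Finset.sum_nonneg fun ρ _ => sq_nonneg _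
    have hfinal : ∑ μ, ‖β0 μ‖ ^ 2 ≤ γ := by
      have hcast : ((∑ μ, ‖β0 μ‖ ^ 2 : ℝ) : ℂ) + ((∑ ρ, ‖d ρ‖ ^ 2 : ℝ) : ℂ) = ((γ:ℝ):ℂ) := by
        rw [← dot_star_self, ← dot_star_self, hval, ← hsplit, hγu]
      have hreal : (∑ μ, ‖β0 μ‖ ^ 2) + (∑ ρ, ‖d ρ‖ ^ 2) = γ := by
        exact_mod_cast hcast
      linarith
    set A0 : (Fin de × Fin de) → Matrix (Fin de) (Fin de) ℂ :=
      fun ν => Matrix.of fun a k => star (W ν (a,k)) with hA0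
    have hCW : ∀ a k b l, (∑ ν, star (W ν (a,k)) * W ν (b,l)) = φ (single k l 1) a b := by
      intro a k b l
      have hc : C (a,k) (b,l) = φ (single k l 1) a b := by
        simpa [hCdef] using hT11 a k b l
      rw [← hc, hW]
      simp [Matrix.mul_apply, Matrix.conjTranspose_apply]
    have kraus : ∀ X : Matrix (Fin de) (Fin de) ℂ,
        φ X = ∑ ν : Fin de × Fin de, A0 ν * X * (A0 ν)ᴴ := by
      intro X
      ext a b
      have lhs_eq : φ X a b = ∑ k, ∑ l, X k l * φ (single k l 1) a b := by
        conv_lhs => rw [Matrix.matrix_eq_sum_single X]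
        rw [map_sum, Matrix.sum_apply]
        refine Finset.sum_congr rfl fun k _ => ?_
        rw [map_sum, Matrix.sum_apply]
        refine Finset.sum_congr rfl fun l _ => ?_
        have hsb : single k l (X k l)
            = X k l • (single k l 1 : Matrix (Fin de) (Fin de) ℂ) := by
          rw [Matrix.smul_single, smul_eq_mul, mul_one]
        rw [hsb, LinearMap.map_smul, Matrix.smul_apply, smul_eq_mul]
      have rhs_eq : ∀ ν, (A0 ν * X * (A0 ν)ᴴ) a b
          = ∑ k, ∑ l, star (W ν (a,k)) * X k l * W ν (b,l) := by
        intro ν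
        simp only [Matrix.mul_apply, Matrix.conjTranspose_apply, hA0, Matrix.of_apply,
          Finset.sum_mul, star_star]
        rw [Finset.sum_comm]
      rw [lhs_eq, Matrix.sum_apply]
      calc ∑ k, ∑ l, X k l * φ (single k l 1) a b
          = ∑ k, ∑ l, X k l * (∑ ν, star (W ν (a,k)) * W ν (b,l)) := by
            exact Finset.sum_congr rfl fun k _ => Finset.sum_congr rfl fun l _ => by rw [hCW]
        _ = ∑ ν : Fin de × Fin de, ∑ k, ∑ l, star (W ν (a,k)) * X k l * W ν (b,l) := by
            simp only [Finset.mul_sum]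
            refine Eq.trans (Finset.sum_congr rfl fun k _ => Finset.sum_comm) ?_
            rw [Finset.sum_comm]
            exact Finset.sum_congr rfl fun ν _ => Finset.sum_congr rfl fun k _ =>
              Finset.sum_congr rfl fun l _ => by ring
        _ = ∑ ν : Fin de × Fin de, (A0 ν * X * (A0 ν)ᴴ) a b :=
            Finset.sum_congr rfl fun ν _ => (rhs_eq ν).symm
    have hBrep : B = ∑ ν : Fin de × Fin de, β0 ν • A0 ν := by
      ext a k
      have h1 : v (a,k) = B a k := by
        simpa [hvdef] using hT12 a k
      rw [← h1, ← hvW]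
      simp [Matrix.mulVec, dotProduct, Matrix.conjTranspose_apply, hA0,
        Matrix.sum_apply, Matrix.smul_apply, mul_comm]
    refine ⟨de ^ 2, le_refl _, ?_⟩
    set e : Fin (de ^ 2) ≃ Fin de × Fin de := (finCongr (pow_two de)).trans finProdFinEquiv.symm
      with he
    refine ⟨fun μ => A0 (e μ), fun μ => β0 (e μ), ?_, ?_, ?_⟩
    · intro X
      rw [kraus X]
      exact (Equiv.sum_comp e (fun ν => A0 ν * X * (A0 ν)ᴴ)).symm
    · rw [hBrep]
      exact (Equiv.sum_comp e (fun ν => β0 ν • A0 ν)).symm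
    · calc ∑ μ, ‖β0 (e μ)‖ ^ 2 = ∑ ν, ‖β0 ν‖ ^ 2 := Equiv.sum_comp e (fun ν => ‖β0 ν‖ ^ 2)
        _ ≤ γ := hfinal

/-- `Φ` is completely positive iff `ω` is completely positive and there is a
Kraus representation `φ = Σ A_μ (·) A_μ†` (with `r ≤ d_e²`) such that `B = Σ β_μ A_μ`
with `Σ |β_μ|² ≤ γ`. -/
theorem stmt_2 {de dg : ℕ} (hde : 0 < de) (hdg : 0 < dg)
    (φ : Matrix (Fin de) (Fin de) ℂ →ₗ[ℂ] Matrix (Fin de) (Fin de) ℂ)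
    (ω : Matrix (Fin de) (Fin de) ℂ →ₗ[ℂ] Matrix (Fin dg) (Fin dg) ℂ)
    (B : Matrix (Fin de) (Fin de) ℂ) (γ : ℝ) (hγ : 0 ≤ γ) :
    IsCompletelyPositive (EDMap ⇑φ ⇑ω B γ) ↔
      (IsCompletelyPositive ⇑ω ∧
        ∃ r : ℕ, r ≤ de ^ 2 ∧
          ∃ (A : Fin r → Matrix (Fin de) (Fin de) ℂ) (β : Fin r → ℂ),
            (∀ X, φ X = ∑ μ, A μ * X * (A μ)ᴴ) ∧
            B = ∑ μ, β μ • A μ ∧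
            ∑ μ, ‖β μ‖ ^ 2 ≤ γ) := by
  constructor
  · intro h
    exact forward hde hdg φ ω B γ h
  · rintro ⟨hω, r, hr, A, β, hφ, hB, hs⟩
    exact backward φ ω B γ hω A β hφ hB hs
end
end

section
/- Let φ : B(H_e) → B(H_e) be a linear map and B ∈ B(H_e). The map X ↦ φ(X) − B X B† is completely positive if and only if there exist r ≤ d_e², operators A_1, …, A_r ∈ B(H_e) and scalars β_1, …, β_r ∈ ℂ such that φ(X) = Σ_{μ=1}^r A_μ X A_μ† for all X, B = Σ_{μ=1}^r β_μ A_μ, and Σ_{μ=1}^r |β_μ|² ≤ 1. -/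
open Matrix ComplexOrder
noncomputable section

namespace Stmt4Aux

local notation "conj'" => starRingEnd ℂ


lemma quad_eval {ι : Type*} [Fintype ι] (C : Matrix ι ι ℂ) (x : ι → ℂ) :
    star x ⬝ᵥ C *ᵥ x = ∑ p, ∑ q, (starRingEnd ℂ) (x p) * C p q * x q := by
  simp only [dotProduct, mulVec, Finset.mul_sum, Pi.star_apply]
  refine Finset.sum_congr rfl fun p _ => Finset.sum_congr rfl fun q _ => by
    simp [RCLike.star_def]; ring

lemma quad_outer {ι : Type*} [Fintype ι] (v : ι → ℂ) (x : ι → ℂ) :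
    star x ⬝ᵥ (Matrix.of fun p q => v p * conj' (v q)) *ᵥ x
      = (∑ p, conj' (x p) * v p) * conj' (∑ p, conj' (x p) * v p) := by
  rw [quad_eval, map_sum, Finset.sum_mul_sum]
  refine Finset.sum_congr rfl fun p _ => Finset.sum_congr rfl fun q _ => by
    simp only [of_apply, _root_.map_mul, Complex.conj_conj]; ring

lemma posSemidef_outer {ι : Type*} [Fintype ι] (v : ι → ℂ) :
    (Matrix.of fun p q => v p * conj' (v q)).PosSemidef := by
  refine posSemidef_iff_dotProduct_mulVec.mpr ⟨?_, ?_⟩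
  · ext p q
    simp only [conjTranspose_apply, of_apply, star_mul', RCLike.star_def, Complex.conj_conj]
    ring
  · intro x
    rw [quad_outer, Complex.mul_conj]
    exact Complex.zero_le_real.mpr (Complex.normSq_nonneg _)

lemma quad_sum_outer {ι κ : Type*} [Fintype ι] [Fintype κ] (v : κ → ι → ℂ) (x : ι → ℂ) :
    star x ⬝ᵥ (Matrix.of fun p q => ∑ μ, v μ p * conj' (v μ q)) *ᵥ x
      = ∑ μ, (∑ p, conj' (x p) * v μ p) * conj' (∑ p, conj' (x p) * v μ p) := by
  rw [quad_eval]
  have step1 : ∀ p q : ι, conj' (x p) * (Matrix.of fun p q => ∑ μ, v μ p * conj' (v μ q)) p q * x q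
      = ∑ μ, (conj' (x p) * v μ p) * conj' (conj' (x q) * v μ q) := by
    intro p q
    simp only [of_apply]
    rw [Finset.mul_sum, Finset.sum_mul]
    refine Finset.sum_congr rfl fun μ _ => by
      simp only [_root_.map_mul, Complex.conj_conj]; ring
  simp_rw [step1]
  calc ∑ p, ∑ q, ∑ μ, (conj' (x p) * v μ p) * conj' (conj' (x q) * v μ q)
      = ∑ p, ∑ μ, ∑ q, (conj' (x p) * v μ p) * conj' (conj' (x q) * v μ q) :=
        Finset.sum_congr rfl fun p _ => Finset.sum_comm
    _ = ∑ μ, ∑ p, ∑ q, (conj' (x p) * v μ p) * conj' (conj' (x q) * v μ q) :=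
        Finset.sum_comm
    _ = ∑ μ, (∑ p, conj' (x p) * v μ p) * conj' (∑ p, conj' (x p) * v μ p) := by
        refine Finset.sum_congr rfl fun μ _ => ?_
        rw [map_sum, Finset.sum_mul_sum]

lemma isHermitian_sum_outer {ι κ : Type*} [Fintype ι] [Fintype κ] (v : κ → ι → ℂ) :
    (Matrix.of fun p q => ∑ μ, v μ p * conj' (v μ q)).IsHermitian := by
  ext p q
  simp only [conjTranspose_apply, of_apply, star_sum, star_mul', RCLike.star_def,
    Complex.conj_conj]
  exact Finset.sum_congr rfl fun μ _ => by ring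

lemma posSemidef_sum_outer_sub_outer {ι κ : Type*} [Fintype ι] [Fintype κ]
    (v : κ → ι → ℂ) (β : κ → ℂ) (hβ : ∑ μ, ‖β μ‖ ^ 2 ≤ 1) :
    Matrix.PosSemidef (Matrix.of fun p q =>
      (∑ μ, v μ p * conj' (v μ q))
        - (∑ μ, β μ * v μ p) * conj' (∑ μ, β μ * v μ q)) := by
  set w : ι → ℂ := fun p => ∑ μ, β μ * v μ p with hw
  have hsplit : (Matrix.of fun p q =>
      (∑ μ, v μ p * conj' (v μ q)) - (∑ μ, β μ * v μ p) * conj' (∑ μ, β μ * v μ q))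
      = (Matrix.of fun p q => ∑ μ, v μ p * conj' (v μ q))
        - (Matrix.of fun p q => w p * conj' (w q)) := by
    ext p q; simp [hw]
  rw [hsplit]
  refine posSemidef_iff_dotProduct_mulVec.mpr ⟨?_, ?_⟩
  · exact (isHermitian_sum_outer v).sub (posSemidef_outer w).1
  · intro x
    rw [sub_mulVec, dotProduct_sub, quad_sum_outer, quad_outer]
    set t : κ → ℂ := fun μ => ∑ p, conj' (x p) * v μ p with htdef
    have hs : ∑ p, conj' (x p) * w p = ∑ μ, β μ * t μ := by
      simp only [hw, htdef, Finset.mul_sum]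
      rw [Finset.sum_comm]
      exact Finset.sum_congr rfl fun μ _ => Finset.sum_congr rfl fun p _ => by ring
    rw [hs]
    set s : ℂ := ∑ μ, β μ * t μ with hsdef
    simp only [Complex.mul_conj]
    rw [← Complex.ofReal_sum, ← Complex.ofReal_sub]
    rw [Complex.zero_le_real]
    rw [sub_nonneg]
    have h1 : ‖s‖ ≤ ∑ μ, ‖β μ‖ * ‖t μ‖ :=
      (norm_sum_le _ _).trans (le_of_eq (Finset.sum_congr rfl fun μ _ => norm_mul _ _))
    have h2 : ‖s‖ ^ 2 ≤ (∑ μ, ‖β μ‖ * ‖t μ‖) ^ 2 :=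
      pow_le_pow_left₀ (norm_nonneg _) h1 2
    have h3 : (∑ μ, ‖β μ‖ * ‖t μ‖) ^ 2 ≤ (∑ μ, ‖β μ‖ ^ 2) * ∑ μ, ‖t μ‖ ^ 2 :=
      Finset.sum_mul_sq_le_sq_mul_sq _ _ _
    have h4 : (∑ μ, ‖β μ‖ ^ 2) * (∑ μ, ‖t μ‖ ^ 2) ≤ 1 * ∑ μ, ‖t μ‖ ^ 2 :=
      mul_le_mul_of_nonneg_right hβ (Finset.sum_nonneg fun μ _ => sq_nonneg _)
    have : ‖s‖ ^ 2 ≤ ∑ μ, ‖t μ‖ ^ 2 := by linarith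
    calc Complex.normSq s = ‖s‖ ^ 2 := by
          simp [Complex.normSq_eq_norm_sq]
    _ ≤ ∑ μ, ‖t μ‖ ^ 2 := this
    _ = ∑ μ, Complex.normSq (t μ) := Finset.sum_congr rfl fun μ _ => by
          simp [Complex.normSq_eq_norm_sq]


abbrev MatC (de : ℕ) := Matrix (Fin de) (Fin de) ℂ
abbrev Idx (de : ℕ) := Fin de × Fin de

variable {de : ℕ}

/-! ### spectral decomposition helpers -/

section Spectral
variable {ι : Type*} [Fintype ι] [DecidableEq ι] {C : Matrix ι ι ℂ}

lemma spectral_entry (hH : C.IsHermitian) (p q : ι) :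
    C p q = ∑ ν, (hH.eigenvalues ν : ℂ) *
      ((hH.eigenvectorUnitary : Matrix ι ι ℂ) p ν *
        conj' ((hH.eigenvectorUnitary : Matrix ι ι ℂ) q ν)) := by
  conv_lhs => rw [hH.spectral_theorem, Unitary.conjStarAlgAut_apply]
  rw [mul_apply]
  refine Finset.sum_congr rfl fun ν _ => ?_
  rw [mul_diagonal, star_apply, RCLike.star_def]
  simp only [Function.comp_apply, RCLike.ofReal_alg, Complex.real_smul, mul_one]
  ring

lemma unitary_mul_star (hH : C.IsHermitian) (p q : ι) :
    ∑ ν, (hH.eigenvectorUnitary : Matrix ι ι ℂ) p ν *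
      conj' ((hH.eigenvectorUnitary : Matrix ι ι ℂ) q ν) = if p = q then 1 else 0 := by
  have h := Matrix.mem_unitaryGroup_iff.mp (hH.eigenvectorUnitary).2
  have := congrFun (congrFun (congrArg (fun M : Matrix ι ι ℂ => (M : Matrix ι ι ℂ)) h) p) q
  simp only [mul_apply, star_apply, RCLike.star_def, one_apply] at this ⊢
  exact this

lemma star_mul_unitary (hH : C.IsHermitian) (ν ν' : ι) :
    ∑ p, conj' ((hH.eigenvectorUnitary : Matrix ι ι ℂ) p ν) *
      ((hH.eigenvectorUnitary : Matrix ι ι ℂ) p ν') = if ν = ν' then 1 else 0 := by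
  have h := Matrix.mem_unitaryGroup_iff'.mp (hH.eigenvectorUnitary).2
  have := congrFun (congrFun (congrArg (fun M : Matrix ι ι ℂ => (M : Matrix ι ι ℂ)) h) ν) ν'
  simp only [mul_apply, star_apply, RCLike.star_def, one_apply] at this ⊢
  exact this

/-- rank-one decomposition of a PSD matrix from its eigendecomposition -/
lemma psd_decomp (hC : C.PosSemidef) :
    C = Matrix.of fun p q => ∑ ν,
      ((Real.sqrt (hC.1.eigenvalues ν) : ℂ) * (hC.1.eigenvectorUnitary : Matrix ι ι ℂ) p ν) *
      conj' ((Real.sqrt (hC.1.eigenvalues ν) : ℂ) * (hC.1.eigenvectorUnitary : Matrix ι ι ℂ) q ν) := by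
  funext p q
  rw [of_apply, spectral_entry hC.1 p q]
  refine Finset.sum_congr rfl fun ν _ => ?_
  rw [_root_.map_mul, Complex.conj_ofReal]
  have : ((Real.sqrt (hC.1.eigenvalues ν) : ℂ)) * (Real.sqrt (hC.1.eigenvalues ν) : ℂ)
      = (hC.1.eigenvalues ν : ℂ) := by
    rw [← Complex.ofReal_mul, Real.mul_self_sqrt (hC.eigenvalues_nonneg ν)]
  calc (hC.1.eigenvalues ν : ℂ) *
        ((hC.1.eigenvectorUnitary : Matrix ι ι ℂ) p ν *
          conj' ((hC.1.eigenvectorUnitary : Matrix ι ι ℂ) q ν))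
      = ((Real.sqrt (hC.1.eigenvalues ν) : ℂ) * (Real.sqrt (hC.1.eigenvalues ν) : ℂ)) *
        ((hC.1.eigenvectorUnitary : Matrix ι ι ℂ) p ν *
          conj' ((hC.1.eigenvectorUnitary : Matrix ι ι ℂ) q ν)) := by rw [this]
    _ = _ := by ring

end Spectral

/-! ### Choi matrix -/

def choi (Λ : MatC de →ₗ[ℂ] MatC de) : Matrix (Idx de) (Idx de) ℂ :=
  fun p q => Λ (Matrix.single p.2 q.2 1) p.1 q.1

lemma apply_eq (Λ : MatC de →ₗ[ℂ] MatC de) (X : MatC de) (i j : Fin de) :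
    Λ X i j = ∑ k, ∑ l, X k l * choi Λ (i, k) (j, l) := by
  conv_lhs => rw [matrix_eq_sum_single X]
  have : ∀ k l : Fin de, Matrix.single k l (X k l) = X k l • Matrix.single k l (1 : ℂ) := by
    intro k l; rw [smul_single, smul_eq_mul, mul_one]
  simp_rw [this, map_sum, _root_.map_smul]
  rw [Matrix.sum_apply]
  refine Finset.sum_congr rfl fun k _ => ?_
  rw [Matrix.sum_apply]
  refine Finset.sum_congr rfl fun l _ => ?_
  simp [choi]

lemma conj_std (B : MatC de) (k l i j : Fin de) :
    (B * Matrix.single k l (1:ℂ) * Bᴴ) i j = B i k * conj' (B j l) := by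
  rw [mul_apply]
  have : ∀ a, (B * Matrix.single k l (1:ℂ)) i a = if l = a then B i k else 0 := by
    intro a
    rw [mul_apply]
    simp [Matrix.single, ite_and, Finset.sum_ite_eq, Finset.mem_univ]
  simp_rw [this]
  simp [conjTranspose_apply, Finset.sum_ite_eq, Finset.mem_univ, RCLike.star_def]

-- chunk d

lemma choi_psd_of_cp (Λ : MatC de →ₗ[ℂ] MatC de)
    (h : IsCompletelyPositive (fun X => Λ X)) : (choi Λ).PosSemidef := by
  set v : Idx de → ℂ := fun p => if p.1 = p.2 then (1:ℂ) else 0 with hv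
  have hM : (Matrix.of fun p q : Idx de => v p * conj' (v q)).PosSemidef := posSemidef_outer v
  have h2 := h de _ hM
  have heq : tensorAux (fun X => Λ X) de (Matrix.of fun p q : Idx de => v p * conj' (v q))
      = choi Λ := by
    funext p q
    show Λ (fun i j => (Matrix.of fun p q : Idx de => v p * conj' (v q)) (i, p.2) (j, q.2)) p.1 q.1
      = Λ (Matrix.single p.2 q.2 1) p.1 q.1
    have hmat : (fun i j => (Matrix.of fun p q : Idx de => v p * conj' (v q)) (i, p.2) (j, q.2))
        = (Matrix.single p.2 q.2 (1:ℂ) : MatC de) := by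
      funext i j
      by_cases h1 : i = p.2 <;> by_cases hj : j = q.2 <;>
        simp [hv, Matrix.single, h1, hj, eq_comm]
    rw [hmat]
  rwa [heq] at h2

lemma cp_of_choi_psd (Λ : MatC de →ₗ[ℂ] MatC de) (hC : (choi Λ).PosSemidef) :
    IsCompletelyPositive (fun X => Λ X) := by
  set U : Matrix (Idx de) (Idx de) ℂ := (hC.1.eigenvectorUnitary : Matrix (Idx de) (Idx de) ℂ)
    with hU
  set v : Idx de → Idx de → ℂ :=
    fun ν p => (Real.sqrt (hC.1.eigenvalues ν) : ℂ) * U p ν with hvdef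
  have hform : choi Λ = Matrix.of fun p q => ∑ ν, v ν p * conj' (v ν q) := psd_decomp hC
  intro n M hM
  set bigA : Idx de → Matrix (Fin de × Fin n) (Fin de × Fin n) ℂ :=
    fun ν => Matrix.of fun r c => if r.2 = c.2 then v ν (r.1, c.1) else 0 with hbigA
  have key : tensorAux (fun X => Λ X) n M = ∑ ν, bigA ν * M * (bigA ν)ᴴ := by
    funext p q
    have hterm : ∀ ν, (bigA ν * M * (bigA ν)ᴴ) p q
        = ∑ k, ∑ l, v ν (p.1, k) * M (k, p.2) (l, q.2) * conj' (v ν (q.1, l)) := by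
      intro ν
      have inner : ∀ c, (bigA ν * M) p c = ∑ k, v ν (p.1, k) * M (k, p.2) c := by
        intro c
        rw [mul_apply, Fintype.sum_prod_type]
        simp only [hbigA, of_apply, ite_mul, zero_mul, Finset.sum_ite_eq, Finset.mem_univ,
          if_true]
      have adj : ∀ c, (bigA ν)ᴴ c q = if q.2 = c.2 then conj' (v ν (q.1, c.1)) else 0 := by
        intro c
        rw [conjTranspose_apply]
        simp only [hbigA, of_apply, apply_ite (star : ℂ → ℂ), star_zero, RCLike.star_def]
      rw [mul_apply, Fintype.sum_prod_type]
      simp_rw [inner, adj]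
      simp only [mul_ite, mul_zero, Finset.sum_ite_eq, Finset.mem_univ, if_true]
      simp only [Finset.sum_mul]
      rw [Finset.sum_comm]
    have hL : tensorAux (fun X => Λ X) n M p q
        = ∑ k, ∑ l, M (k, p.2) (l, q.2) * choi Λ (p.1, k) (q.1, l) :=
      apply_eq Λ _ p.1 q.1
    rw [Matrix.sum_apply]
    simp_rw [hterm]
    rw [hL, hform]
    calc ∑ k, ∑ l, M (k, p.2) (l, q.2) *
          (Matrix.of fun p q => ∑ ν, v ν p * conj' (v ν q)) (p.1, k) (q.1, l)
        = ∑ k, ∑ l, ∑ ν, v ν (p.1, k) * M (k, p.2) (l, q.2) * conj' (v ν (q.1, l)) := by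
          refine Finset.sum_congr rfl fun k _ => Finset.sum_congr rfl fun l _ => ?_
          rw [of_apply, Finset.mul_sum]
          exact Finset.sum_congr rfl fun ν _ => by ring
      _ = ∑ k, ∑ ν, ∑ l, v ν (p.1, k) * M (k, p.2) (l, q.2) * conj' (v ν (q.1, l)) :=
          Finset.sum_congr rfl fun k _ => Finset.sum_comm
      _ = ∑ ν, ∑ k, ∑ l, v ν (p.1, k) * M (k, p.2) (l, q.2) * conj' (v ν (q.1, l)) :=
          Finset.sum_comm
  rw [key]
  exact Finset.sum_induction _ _ (fun a b ha hb => ha.add hb) Matrix.PosSemidef.zero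
    (fun ν _ => hM.mul_mul_conjTranspose_same (bigA ν))
-- chunk e

def conjBy (B : MatC de) : MatC de →ₗ[ℂ] MatC de where
  toFun X := B * X * Bᴴ
  map_add' X Y := by rw [mul_add, add_mul]
  map_smul' c X := by simp [Matrix.mul_smul, Matrix.smul_mul]

@[simp] lemma conjBy_apply (B X : MatC de) : conjBy B X = B * X * Bᴴ := rfl

lemma fun_eq (φ : MatC de →ₗ[ℂ] MatC de) (B : MatC de) :
    (fun X : MatC de => φ X - B * X * Bᴴ) = (fun X => (φ - conjBy B) X) := by
  funext X; simp

lemma choi_sub (φ : MatC de →ₗ[ℂ] MatC de) (B : MatC de) :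
    choi (φ - conjBy B)
      = choi φ - Matrix.of (fun p q : Idx de => B p.1 p.2 * conj' (B q.1 q.2)) := by
  funext p q
  show (φ - conjBy B) (Matrix.single p.2 q.2 1) p.1 q.1 = _
  rw [Matrix.sub_apply, LinearMap.sub_apply, Matrix.sub_apply]
  congr 1
  exact conj_std B p.2 q.2 p.1 q.1

lemma triple_apply (A X : MatC de) (i j : Fin de) :
    (A * X * Aᴴ) i j = ∑ k, ∑ l, A i k * X k l * conj' (A j l) := by
  rw [mul_apply]
  have : ∀ a, (A * X) i a * Aᴴ a j = ∑ k, A i k * X k a * conj' (A j a) := by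
    intro a
    rw [mul_apply, conjTranspose_apply, Finset.sum_mul, RCLike.star_def]
  simp_rw [this]
  rw [Finset.sum_comm]

lemma reverse_dir (φ : MatC de →ₗ[ℂ] MatC de) (B : MatC de) (r : ℕ)
    (A : Fin r → MatC de) (β : Fin r → ℂ)
    (hA : ∀ X, φ X = ∑ μ, A μ * X * (A μ)ᴴ) (hB : B = ∑ μ, β μ • A μ)
    (hβ : ∑ μ, ‖β μ‖ ^ 2 ≤ 1) :
    IsCompletelyPositive (fun X : MatC de => φ X - B * X * Bᴴ) := by
  rw [fun_eq φ B]
  apply cp_of_choi_psd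
  set vv : Fin r → Idx de → ℂ := fun μ p => A μ p.1 p.2 with hvv
  have hw : ∀ p : Idx de, B p.1 p.2 = ∑ μ, β μ * vv μ p := by
    intro p
    rw [hB, Matrix.sum_apply]
    exact Finset.sum_congr rfl fun μ _ => by simp [hvv]
  have hφE : choi (φ - conjBy B) = Matrix.of (fun p q =>
      (∑ μ, vv μ p * conj' (vv μ q))
        - (∑ μ, β μ * vv μ p) * conj' (∑ μ, β μ * vv μ q)) := by
    rw [choi_sub]
    funext p q
    rw [Matrix.sub_apply, of_apply, of_apply]
    congr 1
    · show choi φ p q = _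
      show φ (Matrix.single p.2 q.2 1) p.1 q.1 = _
      rw [hA, Matrix.sum_apply]
      exact Finset.sum_congr rfl fun μ _ => conj_std (A μ) p.2 q.2 p.1 q.1
    · rw [← hw p, ← hw q]
  rw [hφE]
  exact posSemidef_sum_outer_sub_outer vv β hβ
-- chunk f : forward direction

lemma forward_dir (φ : MatC de →ₗ[ℂ] MatC de) (B : MatC de)
    (h : IsCompletelyPositive (fun X : MatC de => φ X - B * X * Bᴴ)) :
    ∃ r : ℕ, r ≤ de ^ 2 ∧
      ∃ (A : Fin r → MatC de) (β : Fin r → ℂ),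
        (∀ X, φ X = ∑ μ, A μ * X * (A μ)ᴴ) ∧
        B = ∑ μ, β μ • A μ ∧
        ∑ μ, ‖β μ‖ ^ 2 ≤ 1 := by
  rw [fun_eq φ B] at h
  have hψ := choi_psd_of_cp _ h
  set w : Idx de → ℂ := fun p => B p.1 p.2 with hwdef
  have hsub : choi (φ - conjBy B)
      = choi φ - Matrix.of (fun p q : Idx de => w p * conj' (w q)) := choi_sub φ B
  have hCφ : (choi φ).PosSemidef := by
    have hplus : choi φ = choi (φ - conjBy B)
        + Matrix.of (fun p q : Idx de => w p * conj' (w q)) := by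
      rw [hsub, sub_add_cancel]
    rw [hplus]
    exact hψ.add (posSemidef_outer w)
  set U : Matrix (Idx de) (Idx de) ℂ := (hCφ.1.eigenvectorUnitary : Matrix (Idx de) (Idx de) ℂ)
    with hU
  set lam : Idx de → ℝ := hCφ.1.eigenvalues with hlamdef
  have hlam0 : ∀ ν, 0 ≤ lam ν := fun ν => hCφ.eigenvalues_nonneg ν
  set v : Idx de → Idx de → ℂ := fun ν p => (Real.sqrt (lam ν) : ℂ) * U p ν with hvdef
  have hform : choi φ = Matrix.of fun p q => ∑ ν, v ν p * conj' (v ν q) := psd_decomp hCφ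
  set c : Idx de → ℂ := fun ν => ∑ p, conj' (U p ν) * w p with hcdef
  -- master inequality
  have master : ∀ x : Idx de → ℂ,
      0 ≤ (∑ ν, (∑ p, conj' (x p) * v ν p) * conj' (∑ p, conj' (x p) * v ν p))
        - (∑ p, conj' (x p) * w p) * conj' (∑ p, conj' (x p) * w p) := by
    intro x
    have h0 := hψ.dotProduct_mulVec_nonneg x
    rw [hsub, hform, sub_mulVec, dotProduct_sub, quad_sum_outer, quad_outer] at h0
    exact h0
  -- (a) |c ν|² ≤ lam ν
  have hkey : ∀ ν, Complex.normSq (c ν) ≤ lam ν := by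
    intro ν₀
    have hx := master (fun p => U p ν₀)
    have ht : ∀ ν, ∑ p, conj' (U p ν₀) * v ν p
        = if ν₀ = ν then (Real.sqrt (lam ν) : ℂ) else 0 := by
      intro ν
      have horth := star_mul_unitary hCφ.1 ν₀ ν
      calc ∑ p, conj' (U p ν₀) * v ν p
          = (Real.sqrt (lam ν) : ℂ) * ∑ p, conj' (U p ν₀) * U p ν := by
            rw [Finset.mul_sum]
            exact Finset.sum_congr rfl fun p _ => by rw [hvdef]; ring
        _ = _ := by rw [horth]; split_ifs <;> simp
    simp_rw [ht] at hx
    have hsum : ∑ ν, (if ν₀ = ν then (Real.sqrt (lam ν) : ℂ) else 0)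
        * conj' (if ν₀ = ν then (Real.sqrt (lam ν) : ℂ) else 0) = (lam ν₀ : ℂ) := by
      simp only [apply_ite conj', map_zero, ite_mul, zero_mul, mul_ite, mul_zero,
        Finset.sum_ite_eq, Finset.mem_univ, if_true, Complex.conj_ofReal]
      rw [← Complex.ofReal_mul, Real.mul_self_sqrt (hlam0 ν₀)]
    rw [hsum, Complex.mul_conj, ← Complex.ofReal_sub, Complex.zero_le_real, sub_nonneg] at hx
    exact hx
  have hczero : ∀ ν, lam ν = 0 → c ν = 0 := by
    intro ν hν
    have := hkey ν
    rw [hν] at this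
    exact Complex.normSq_eq_zero.mp (le_antisymm this (Complex.normSq_nonneg _))
  -- (b) T ≤ 1
  set T : ℝ := ∑ ν, (if lam ν = 0 then 0 else Complex.normSq (c ν) / lam ν) with hTdef
  have hT0 : 0 ≤ T := Finset.sum_nonneg fun ν _ => by
    split_ifs with hν
    · exact le_refl 0
    · exact div_nonneg (Complex.normSq_nonneg _) (hlam0 ν)
  have hT1 : T ≤ 1 := by
    set b : Idx de → ℂ := fun ν => if lam ν = 0 then 0 else c ν / (lam ν : ℂ) with hbdef
    set x : Idx de → ℂ := fun p => ∑ ν, b ν * U p ν with hxdef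
    have base : ∀ ν, ∑ p, conj' (x p) * U p ν = conj' (b ν) := by
      intro ν
      calc ∑ p, conj' (x p) * U p ν
          = ∑ p, ∑ ν', conj' (b ν') * (conj' (U p ν') * U p ν) := by
            refine Finset.sum_congr rfl fun p _ => ?_
            rw [hxdef, map_sum, Finset.sum_mul]
            exact Finset.sum_congr rfl fun ν' _ => by rw [_root_.map_mul]; ring
        _ = ∑ ν', conj' (b ν') * ∑ p, conj' (U p ν') * U p ν := by
            rw [Finset.sum_comm]
            exact Finset.sum_congr rfl fun ν' _ => by rw [Finset.mul_sum]
        _ = conj' (b ν) := by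
            simp_rw [hU, star_mul_unitary hCφ.1]
            simp [Finset.sum_ite_eq, Finset.mem_univ]
    have hσ : ∀ ν, ∑ p, conj' (x p) * v ν p = (Real.sqrt (lam ν) : ℂ) * conj' (b ν) := by
      intro ν
      rw [← base ν, Finset.mul_sum]
      exact Finset.sum_congr rfl fun p _ => by rw [hvdef]; ring
    have hswb : ∑ p, conj' (x p) * w p = ∑ ν, conj' (b ν) * c ν := by
      calc ∑ p, conj' (x p) * w p
          = ∑ p, ∑ ν', conj' (b ν') * (conj' (U p ν') * w p) := by
            refine Finset.sum_congr rfl fun p _ => ?_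
            rw [hxdef, map_sum, Finset.sum_mul]
            exact Finset.sum_congr rfl fun ν' _ => by rw [_root_.map_mul]; ring
        _ = ∑ ν', conj' (b ν') * ∑ p, conj' (U p ν') * w p := by
            rw [Finset.sum_comm]
            exact Finset.sum_congr rfl fun ν' _ => by rw [Finset.mul_sum]
        _ = ∑ ν, conj' (b ν) * c ν := rfl
    have hbc : ∀ ν, conj' (b ν) * c ν
        = ((if lam ν = 0 then 0 else Complex.normSq (c ν) / lam ν : ℝ) : ℂ) := by
      intro ν
      by_cases hν : lam ν = 0
      · simp [hbdef, hν]
      · simp only [hbdef, hν, if_false]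
        rw [map_div₀, Complex.conj_ofReal]
        rw [div_mul_eq_mul_div, mul_comm, Complex.mul_conj]
        push_cast
        rfl
    have hterm2 : ∀ ν, ((Real.sqrt (lam ν) : ℂ) * conj' (b ν))
        * conj' ((Real.sqrt (lam ν) : ℂ) * conj' (b ν))
        = ((if lam ν = 0 then 0 else Complex.normSq (c ν) / lam ν : ℝ) : ℂ) := by
      intro ν
      by_cases hν : lam ν = 0
      · simp [hbdef, hν]
      · simp only [hbdef, hν, if_false]
        rw [_root_.map_mul, Complex.conj_ofReal, Complex.conj_conj]
        have : ((Real.sqrt (lam ν) : ℂ)) * conj' (c ν / (lam ν : ℂ))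
            * ((Real.sqrt (lam ν) : ℂ) * (c ν / (lam ν : ℂ)))
            = ((Real.sqrt (lam ν) : ℂ) * (Real.sqrt (lam ν) : ℂ))
              * ((c ν / (lam ν : ℂ)) * conj' (c ν / (lam ν : ℂ))) := by ring
        rw [this, ← Complex.ofReal_mul, Real.mul_self_sqrt (hlam0 ν), Complex.mul_conj,
          Complex.normSq_div, Complex.normSq_ofReal]
        rw [← Complex.ofReal_mul]
        congr 1
        field_simp
    have hx := master x
    simp_rw [hσ, hswb, hterm2, hbc] at hx
    simp only [← Complex.ofReal_sum] at hx
    rw [Complex.conj_ofReal, ← Complex.ofReal_mul, ← Complex.ofReal_sub,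
      Complex.zero_le_real, ← hTdef] at hx
    nlinarith
  -- assemble the data
  have hde2 : de ^ 2 = de * de := by rw [pow_two]
  set e : Fin (de ^ 2) ≃ Idx de := (finCongr hde2).trans finProdFinEquiv.symm with hedef
  set β' : Idx de → ℂ :=
    fun ν => if lam ν = 0 then 0 else c ν / (Real.sqrt (lam ν) : ℂ) with hβ'def
  refine ⟨de ^ 2, le_refl _, fun μ => Matrix.of fun i j => v (e μ) (i, j),
    fun μ => β' (e μ), ?_, ?_, ?_⟩
  · -- Kraus representation
    intro X
    ext i j
    rw [apply_eq φ X i j, Matrix.sum_apply]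
    have hterm : ∀ μ : Fin (de ^ 2),
        ((Matrix.of fun i j => v (e μ) (i, j)) * X
          * ((Matrix.of fun i j => v (e μ) (i, j)))ᴴ) i j
        = ∑ k, ∑ l, v (e μ) (i, k) * X k l * conj' (v (e μ) (j, l)) := by
      intro μ
      rw [triple_apply]
      rfl
    simp_rw [hterm]
    calc ∑ k, ∑ l, X k l * choi φ (i, k) (j, l)
        = ∑ k, ∑ l, ∑ ν, v ν (i, k) * X k l * conj' (v ν (j, l)) := by
          refine Finset.sum_congr rfl fun k _ => Finset.sum_congr rfl fun l _ => ?_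
          rw [hform, of_apply, Finset.mul_sum]
          exact Finset.sum_congr rfl fun ν _ => by ring
      _ = ∑ k, ∑ ν, ∑ l, v ν (i, k) * X k l * conj' (v ν (j, l)) :=
          Finset.sum_congr rfl fun k _ => Finset.sum_comm
      _ = ∑ ν, ∑ k, ∑ l, v ν (i, k) * X k l * conj' (v ν (j, l)) :=
          Finset.sum_comm
      _ = ∑ μ : Fin (de ^ 2), ∑ k, ∑ l, v (e μ) (i, k) * X k l * conj' (v (e μ) (j, l)) :=
          (Equiv.sum_comp e _).symm
  · -- B = ∑ β μ • A μ
    ext i j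
    rw [Matrix.sum_apply]
    have : ∀ μ : Fin (de ^ 2),
        (β' (e μ) • (Matrix.of fun i j => v (e μ) (i, j))) i j
          = β' (e μ) * v (e μ) (i, j) := fun μ => rfl
    simp_rw [this]
    rw [Equiv.sum_comp e (fun ν => β' ν * v ν (i, j))]
    have hstep : ∀ ν, β' ν * v ν (i, j) = c ν * U (i, j) ν := by
      intro ν
      by_cases hν : lam ν = 0
      · simp [hβ'def, hν, hczero ν hν, hvdef]
      · simp only [hβ'def, hν, if_false, hvdef]
        have hs : (Real.sqrt (lam ν) : ℂ) ≠ 0 := by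
          simp only [ne_eq, Complex.ofReal_eq_zero]
          exact Real.sqrt_ne_zero'.mpr (lt_of_le_of_ne (hlam0 ν) (Ne.symm hν))
        field_simp
    simp_rw [hstep]
    symm
    calc ∑ ν, c ν * U (i, j) ν
        = ∑ ν, ∑ q, w q * (U (i, j) ν * conj' (U q ν)) := by
          refine Finset.sum_congr rfl fun ν _ => ?_
          simp only [hcdef]
          rw [Finset.sum_mul]
          exact Finset.sum_congr rfl fun q _ => by ring
      _ = ∑ q, w q * ∑ ν, U (i, j) ν * conj' (U q ν) := by
          rw [Finset.sum_comm]
          exact Finset.sum_congr rfl fun q _ => by rw [Finset.mul_sum]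
      _ = B i j := by
          simp_rw [hU, unitary_mul_star hCφ.1]
          simp [Finset.sum_ite_eq, Finset.mem_univ, hwdef]
  · -- norm bound
    rw [Equiv.sum_comp e (fun ν => ‖β' ν‖ ^ 2)]
    have : ∀ ν, ‖β' ν‖ ^ 2 = if lam ν = 0 then 0 else Complex.normSq (c ν) / lam ν := by
      intro ν
      by_cases hν : lam ν = 0
      · simp [hβ'def, hν]
      · simp only [hβ'def, hν, if_false]
        rw [norm_div, div_pow, Complex.norm_real, Real.norm_eq_abs,
          abs_of_nonneg (Real.sqrt_nonneg _), Real.sq_sqrt (hlam0 ν)]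
        congr 1
        rw [Complex.sq_norm]
    simp_rw [this]
    rw [← hTdef]
    exact hT1

end Stmt4Aux

/-- `X ↦ φ(X) − B X B†` is completely positive iff there is a Kraus
representation `φ = Σ A_μ (·) A_μ†` (with `r ≤ d_e²`) such that `B = Σ β_μ A_μ` with
`Σ |β_μ|² ≤ 1`. -/
theorem stmt_4 {de : ℕ} (hde : 0 < de)
    (φ : Matrix (Fin de) (Fin de) ℂ →ₗ[ℂ] Matrix (Fin de) (Fin de) ℂ)
    (B : Matrix (Fin de) (Fin de) ℂ) :
    IsCompletelyPositive (fun X : Matrix (Fin de) (Fin de) ℂ => φ X - B * X * Bᴴ) ↔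
      ∃ r : ℕ, r ≤ de ^ 2 ∧
        ∃ (A : Fin r → Matrix (Fin de) (Fin de) ℂ) (β : Fin r → ℂ),
          (∀ X, φ X = ∑ μ, A μ * X * (A μ)ᴴ) ∧
          B = ∑ μ, β μ • A μ ∧
          ∑ μ, ‖β μ‖ ^ 2 ≤ 1 := by
  constructor
  · exact fun h => Stmt4Aux.forward_dir φ B h
  · rintro ⟨r, hr, A, β, hA, hB, hβ⟩
    exact Stmt4Aux.reverse_dir φ B r A β hA hB hβ
end
end

section
/- Let φ(X) = Σ_{μ=1}^r A_μ X A_μ† and ω(X) = Σ_{ν=1}^s Q_ν X Q_ν† with A_μ ∈ B(H_e), Q_ν ∈ B(H_e, H_g), let γ ≥ 0, and let B = Σ_{μ=1}^r β_μ A_μ with β ∈ ℂ^r satisfying Σ_μ |β_μ|² ≤ γ. Define the operators 𝖠_0 = [[0,0],[0, (γ − Σ_μ|β_μ|²)^{1/2} I_g]], 𝖠_μ = [[A_μ, 0],[0, β_μ* I_g]] for μ = 1,…,r, and 𝖠_{r+ν} = [[0,0],[Q_ν, 0]] for ν = 1,…,s, all in B(H). Then the excitation-damping map Φ determined by (φ,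 ω, B, γ) satisfies Φ(X) = Σ_{μ=0}^{r+s} 𝖠_μ X 𝖠_μ† for all X ∈ B(H); in particular Φ is completely positive. -/
open Matrix ComplexOrder
noncomputable section

lemma sum_fromBlocks {ι a b c d : Type*} (t : Finset ι)
    (f : ι → Matrix a c ℂ) (g : ι → Matrix a d ℂ) (h : ι → Matrix b c ℂ)
    (k : ι → Matrix b d ℂ) :
    ∑ i ∈ t, fromBlocks (f i) (g i) (h i) (k i) =
      fromBlocks (∑ i ∈ t, f i) (∑ i ∈ t, g i) (∑ i ∈ t, h i) (∑ i ∈ t, k i) := by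
  ext (i | i) (j | j) <;> simp [Matrix.sum_apply]

lemma tensorAux_single {a b : Type*} [Fintype a] (K : Matrix b a ℂ) (n : ℕ)
    (M : Matrix (a × Fin n) (a × Fin n) ℂ) :
    tensorAux (fun X => K * X * Kᴴ) n M =
      (kroneckerMap (· * ·) K (1 : Matrix (Fin n) (Fin n) ℂ)) * M *
        (kroneckerMap (· * ·) K (1 : Matrix (Fin n) (Fin n) ℂ))ᴴ := by
  ext ⟨i, k⟩ ⟨j, l⟩
  simp [tensorAux, Matrix.mul_apply, kroneckerMap_apply, Fintype.sum_prod_type,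
    one_apply, mul_ite, ite_mul, mul_zero, zero_mul, Finset.sum_ite_eq,
    Finset.sum_ite_eq', mul_comm, mul_assoc, mul_left_comm,
    apply_ite (starRingEnd ℂ), map_zero]
  rfl

lemma tensorAux_add {a b : Type*} (f g : Matrix a a ℂ → Matrix b b ℂ) (n : ℕ)
    (M : Matrix (a × Fin n) (a × Fin n) ℂ) :
    tensorAux (fun X => f X + g X) n M = tensorAux f n M + tensorAux g n M := by
  ext p q; simp [tensorAux]

lemma tensorAux_sum {a b ι : Type*} (t : Finset ι) (f : ι → Matrix a a ℂ → Matrix b b ℂ) (n : ℕ)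
    (M : Matrix (a × Fin n) (a × Fin n) ℂ) :
    tensorAux (fun X => ∑ i ∈ t, f i X) n M = ∑ i ∈ t, tensorAux (f i) n M := by
  ext p q; simp [tensorAux, Matrix.sum_apply]

lemma psd_add {n : Type*} [Fintype n] {A B : Matrix n n ℂ} (hA : A.PosSemidef)
    (hB : B.PosSemidef) : (A + B).PosSemidef := by
  refine ⟨hA.1.add hB.1, fun x => ?_⟩
  have := add_nonneg (hA.2 x) (hB.2 x)
  simpa [mul_add, add_mul, Finsupp.sum_add] using this

lemma psd_sum {ι n : Type*} [Fintype n] (t : Finset ι) (f : ι → Matrix n n ℂ)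
    (h : ∀ i ∈ t, (f i).PosSemidef) : (∑ i ∈ t, f i).PosSemidef := by
  classical
  induction t using Finset.induction_on with
  | empty => simpa using Matrix.PosSemidef.zero
  | insert _ _ hx ih =>
    rw [Finset.sum_insert hx]
    exact psd_add (h _ (Finset.mem_insert_self _ _))
      (ih fun i hi => h i (Finset.mem_insert_of_mem hi))

/-- explicit Kraus representation of an excitation-damping map built from
Kraus representations of `φ` and `ω` and `B = Σ β_μ A_μ` with `Σ |β_μ|² ≤ γ`;
in particular the map is completely positive. -/
theorem stmt_6 {de dg : ℕ} (hde : 0 < de) (hdg : 0 < dg) {r s : ℕ}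
    (A : Fin r → Matrix (Fin de) (Fin de) ℂ)
    (Q : Fin s → Matrix (Fin dg) (Fin de) ℂ)
    (γ : ℝ) (hγ : 0 ≤ γ) (β : Fin r → ℂ) (hβ : ∑ μ, ‖β μ‖ ^ 2 ≤ γ) :
    (∀ X : Matrix (Fin de ⊕ Fin dg) (Fin de ⊕ Fin dg) ℂ,
      EDMap (fun Y => ∑ μ, A μ * Y * (A μ)ᴴ) (fun Y => ∑ ν, Q ν * Y * (Q ν)ᴴ)
          (∑ μ, β μ • A μ) γ X =
        (fromBlocks 0 0 0 ((Real.sqrt (γ - ∑ μ, ‖β μ‖ ^ 2) : ℂ) • 1)) * X *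
            (fromBlocks 0 0 0 ((Real.sqrt (γ - ∑ μ, ‖β μ‖ ^ 2) : ℂ) • 1))ᴴ +
          (∑ μ, (fromBlocks (A μ) 0 0 ((starRingEnd ℂ (β μ)) • 1)) * X *
            (fromBlocks (A μ) 0 0 ((starRingEnd ℂ (β μ)) • 1))ᴴ) +
          ∑ ν, (fromBlocks 0 0 (Q ν) 0) * X * (fromBlocks 0 0 (Q ν) 0)ᴴ) ∧
    IsCompletelyPositive
      (EDMap (fun Y => ∑ μ, A μ * Y * (A μ)ᴴ) (fun Y => ∑ ν, Q ν * Y * (Q ν)ᴴ)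
        (∑ μ, β μ • A μ) γ) := by
  have part1 : ∀ X : Matrix (Fin de ⊕ Fin dg) (Fin de ⊕ Fin dg) ℂ,
      EDMap (fun Y => ∑ μ, A μ * Y * (A μ)ᴴ) (fun Y => ∑ ν, Q ν * Y * (Q ν)ᴴ)
          (∑ μ, β μ • A μ) γ X =
        (fromBlocks 0 0 0 ((Real.sqrt (γ - ∑ μ, ‖β μ‖ ^ 2) : ℂ) • 1)) * X *
            (fromBlocks 0 0 0 ((Real.sqrt (γ - ∑ μ, ‖β μ‖ ^ 2) : ℂ) • 1))ᴴ +
          (∑ μ, (fromBlocks (A μ) 0 0 ((starRingEnd ℂ (β μ)) • 1)) * X *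
            (fromBlocks (A μ) 0 0 ((starRingEnd ℂ (β μ)) • 1))ᴴ) +
          ∑ ν, (fromBlocks 0 0 (Q ν) 0) * X * (fromBlocks 0 0 (Q ν) 0)ᴴ := by
    intro X
    simp only [EDMap]
    rw [← fromBlocks_toBlocks X]
    set X11 := X.toBlocks₁₁; set X12 := X.toBlocks₁₂; set X21 := X.toBlocks₂₁; set X22 := X.toBlocks₂₂
    simp only [fromBlocks_conjTranspose, fromBlocks_multiply, toBlocks_fromBlocks₁₁,
      toBlocks_fromBlocks₁₂, toBlocks_fromBlocks₂₁, toBlocks_fromBlocks₂₂,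
      conjTranspose_zero, conjTranspose_smul, conjTranspose_one, Matrix.zero_mul, Matrix.mul_zero,
      add_zero, zero_add, smul_mul_assoc, mul_smul_comm, mul_one, one_mul,
      sum_fromBlocks, fromBlocks_add, smul_smul]
    rw [fromBlocks_inj]
    refine ⟨by simp, ?_, ?_, ?_⟩
    · simp [Matrix.sum_mul, Matrix.smul_mul]
    · simp [conjTranspose_sum, conjTranspose_smul, Matrix.mul_sum, Matrix.mul_smul]
    · have h1 : (0:ℝ) ≤ γ - ∑ μ, ‖β μ‖ ^ 2 := by linarith
      have h3 : ∀ z : ℂ, star (starRingEnd ℂ z) * starRingEnd ℂ z = ((‖z‖ ^ 2 : ℝ) : ℂ) := by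
        intro z
        simp [Complex.mul_conj, Complex.normSq_eq_norm_sq]
      have h4 : star ((√(γ - ∑ μ, ‖β μ‖ ^ 2) : ℝ) : ℂ) * ((√(γ - ∑ μ, ‖β μ‖ ^ 2) : ℝ) : ℂ)
          = (((γ - ∑ μ, ‖β μ‖ ^ 2 : ℝ)) : ℂ) := by
        rw [Complex.star_def, Complex.conj_ofReal, ← Complex.ofReal_mul, Real.mul_self_sqrt h1]
      rw [h4]
      simp only [h3]
      rw [← Finset.sum_smul, ← add_smul]
      congr 2
      push_cast
      ring
  refine ⟨part1, ?_⟩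
  intro n M hM
  have heq : tensorAux
      (EDMap (fun Y => ∑ μ, A μ * Y * (A μ)ᴴ) (fun Y => ∑ ν, Q ν * Y * (Q ν)ᴴ)
        (∑ μ, β μ • A μ) γ) n M =
      tensorAux (fun X =>
        ((fromBlocks 0 0 0 ((Real.sqrt (γ - ∑ μ, ‖β μ‖ ^ 2) : ℂ) • 1)) * X *
            (fromBlocks 0 0 0 ((Real.sqrt (γ - ∑ μ, ‖β μ‖ ^ 2) : ℂ) • 1))ᴴ +
          (∑ μ, (fromBlocks (A μ) 0 0 ((starRingEnd ℂ (β μ)) • 1)) * X *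
            (fromBlocks (A μ) 0 0 ((starRingEnd ℂ (β μ)) • 1))ᴴ)) +
          ∑ ν, (fromBlocks 0 0 (Q ν) 0) * X * (fromBlocks 0 0 (Q ν) 0)ᴴ) n M := by
    ext p q
    simp only [tensorAux]
    exact congrFun (congrFun (part1 _) p.1) q.1
  rw [heq, tensorAux_add, tensorAux_add, tensorAux_single, tensorAux_sum, tensorAux_sum]
  refine psd_add (psd_add (hM.mul_mul_conjTranspose_same _) ?_) ?_
  · refine psd_sum _ _ fun μ _ => ?_
    rw [tensorAux_single]
    exact hM.mul_mul_conjTranspose_same _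
  · refine psd_sum _ _ fun ν _ => ?_
    rw [tensorAux_single]
    exact hM.mul_mul_conjTranspose_same _
end
end

section
/- Let φ : B(H_e) → B(H_e) be a linear map, B ∈ B(H_e), Ω ∈ B(H_g) a positive semidefinite operator with tr Ω = 1, and let Φ be the excitation-damping map determined by (φ, ω, B, γ=1) with ω(X_ee) = tr[X_ee − φ(X_ee)] Ω. Then Φ is completely positive and trace preserving if and only if the map X ↦ φ(X) − B X B† is completely positive and φ is trace non-increasing (i.e., tr φ(X) ≤ tr X for all positive semidefinite X ∈ B(H_e)). -/
open Matrix ComplexOrder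
noncomputable section

namespace Stmt7Aux

/-- Over ℂ, nonnegativity of the quadratic form implies positive semidefiniteness. -/
lemma psd_of_quad {m : Type*} [Fintype m] [DecidableEq m] (M : Matrix m m ℂ)
    (h : ∀ x : m → ℂ, 0 ≤ star x ⬝ᵥ M *ᵥ x) : M.PosSemidef := by
  refine Matrix.PosSemidef.of_dotProduct_mulVec_nonneg ?_ h
  have hr : ∀ x : m → ℂ, (starRingEnd ℂ) (star x ⬝ᵥ M *ᵥ x) = star x ⬝ᵥ M *ᵥ x := by
    intro x
    have := h x
    rw [Complex.le_def] at this
    rw [Complex.conj_eq_iff_im]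
    exact this.2.symm
  have key : ∀ x y : m → ℂ, (starRingEnd ℂ) (star x ⬝ᵥ M *ᵥ y) = star y ⬝ᵥ M *ᵥ x := by
    intro x y
    have h1 := hr (x + y)
    have h2 := hr (x + Complex.I • y)
    have e1 : star (x + y) ⬝ᵥ M *ᵥ (x + y) =
        star x ⬝ᵥ M *ᵥ x + (star x ⬝ᵥ M *ᵥ y + (star y ⬝ᵥ M *ᵥ x + star y ⬝ᵥ M *ᵥ y)) := by
      simp [star_add, add_dotProduct, mulVec_add, dotProduct_add]
      ring
    have e2 : star (x + Complex.I • y) ⬝ᵥ M *ᵥ (x + Complex.I • y) =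
        star x ⬝ᵥ M *ᵥ x + (Complex.I * (star x ⬝ᵥ M *ᵥ y)
          - Complex.I * (star y ⬝ᵥ M *ᵥ x) + star y ⬝ᵥ M *ᵥ y) := by
      simp [star_add, add_dotProduct, mulVec_add, dotProduct_add, star_smul, smul_dotProduct,
        mulVec_smul, dotProduct_smul, smul_eq_mul, Complex.star_def, Complex.conj_I]
      linear_combination (-(star y ⬝ᵥ M *ᵥ y)) * Complex.I_sq
    rw [e1] at h1
    rw [e2] at h2
    simp only [map_add, map_sub, RingHom.map_mul, hr, Complex.conj_I] at h1 h2
    set a := star x ⬝ᵥ M *ᵥ y with ha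
    set b := star y ⬝ᵥ M *ᵥ x with hb
    set ca := (starRingEnd ℂ) a with hca
    set cb := (starRingEnd ℂ) b with hcb
    have h1' : ca + cb = a + b := by linear_combination h1
    have h2' : -Complex.I * ca + Complex.I * cb = Complex.I * a - Complex.I * b := by
      linear_combination h2
    have hI : Complex.I * Complex.I = -1 := Complex.I_mul_I
    linear_combination h1' / 2 + Complex.I * h2' / 2 + ((ca - cb + a - b) / 2) * Complex.I_sq
  ext i j
  have h1 : M i j = star (Pi.single i 1 : m → ℂ) ⬝ᵥ M *ᵥ Pi.single j 1 := by
    simp [mulVec_single, dotProduct, Pi.single_apply, apply_ite (star : ℂ → ℂ)]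
  have h2 : M j i = star (Pi.single j 1 : m → ℂ) ⬝ᵥ M *ᵥ Pi.single i 1 := by
    simp [mulVec_single, dotProduct, Pi.single_apply, apply_ite (star : ℂ → ℂ)]
  rw [conjTranspose_apply, h2, Complex.star_def, key]
  exact h1.symm



lemma psd_fromBlocks_diag {m o : Type*} [Fintype m] [Fintype o] [DecidableEq m] [DecidableEq o]
    {A : Matrix m m ℂ} {D : Matrix o o ℂ} (hA : A.PosSemidef) (hD : D.PosSemidef) :
    (fromBlocks A 0 0 D).PosSemidef := by
  obtain ⟨C, rfl⟩ : ∃ C : Matrix m m ℂ, A = Cᴴ * C := by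
    open scoped MatrixOrder in exact CStarAlgebra.nonneg_iff_eq_star_mul_self.mp hA.nonneg
  obtain ⟨F, rfl⟩ : ∃ F : Matrix o o ℂ, D = Fᴴ * F := by
    open scoped MatrixOrder in exact CStarAlgebra.nonneg_iff_eq_star_mul_self.mp hD.nonneg
  have : fromBlocks (Cᴴ * C) 0 0 (Fᴴ * F) = (fromBlocks C 0 0 F)ᴴ * (fromBlocks C 0 0 F) := by
    simp [fromBlocks_conjTranspose, fromBlocks_multiply]
  rw [this]
  exact posSemidef_conjTranspose_mul_self _

lemma trace_sum_type {m o : Type*} [Fintype m] [Fintype o]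
    (X : Matrix (m ⊕ o) (m ⊕ o) ℂ) :
    X.trace = X.toBlocks₁₁.trace + X.toBlocks₂₂.trace := by
  simp [Matrix.trace, Fintype.sum_sum_type, toBlocks₁₁, toBlocks₂₂, Matrix.diag]

lemma cp_pos {a b : Type*} [Fintype a] [Fintype b] {Λ : Matrix a a ℂ → Matrix b b ℂ}
    (h : IsCompletelyPositive Λ) : IsPositiveMap Λ := by
  intro X hX
  have hM : ((X.submatrix Prod.fst Prod.fst : Matrix (a × Fin 1) (a × Fin 1) ℂ)).PosSemidef :=
    hX.submatrix _
  have h2 := h 1 _ hM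
  have hE : Λ X = (tensorAux Λ 1 (X.submatrix Prod.fst Prod.fst)).submatrix
      (fun i : b => (i, (0 : Fin 1))) (fun i => (i, 0)) := by
    ext i j
    rfl
  rw [hE]
  exact h2.submatrix _

/-- The trace of a PSD complex matrix is nonnegative. -/
lemma psd_trace_nonneg {m : Type*} [Fintype m] [DecidableEq m] {A : Matrix m m ℂ}
    (hA : A.PosSemidef) : 0 ≤ A.trace := by
  rw [Matrix.trace]
  refine Finset.sum_nonneg fun i _ => ?_
  have := hA.dotProduct_mulVec_nonneg (Pi.single i 1)
  simpa [mulVec_single, dotProduct, Pi.single_apply, apply_ite (star : ℂ → ℂ), Matrix.diag] using this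


section Blocks

variable {de dg n : ℕ}

/-- Embedding of the `e`-sector indices. -/
def ein : (Fin de × Fin n) → ((Fin de ⊕ Fin dg) × Fin n) := fun P => (Sum.inl P.1, P.2)

/-- Embedding of the `g`-sector indices. -/
def gin : (Fin dg × Fin n) → ((Fin de ⊕ Fin dg) × Fin n) := fun P => (Sum.inr P.1, P.2)

def Nee (N : Matrix ((Fin de ⊕ Fin dg) × Fin n) ((Fin de ⊕ Fin dg) × Fin n) ℂ) :
    Matrix (Fin de × Fin n) (Fin de × Fin n) ℂ := N.submatrix ein ein

def Neg (N : Matrix ((Fin de ⊕ Fin dg) × Fin n) ((Fin de ⊕ Fin dg) × Fin n) ℂ) :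
    Matrix (Fin de × Fin n) (Fin dg × Fin n) ℂ := N.submatrix ein gin

def Nge (N : Matrix ((Fin de ⊕ Fin dg) × Fin n) ((Fin de ⊕ Fin dg) × Fin n) ℂ) :
    Matrix (Fin dg × Fin n) (Fin de × Fin n) ℂ := N.submatrix gin ein

def Ngg (N : Matrix ((Fin de ⊕ Fin dg) × Fin n) ((Fin de ⊕ Fin dg) × Fin n) ℂ) :
    Matrix (Fin dg × Fin n) (Fin dg × Fin n) ℂ := N.submatrix gin gin

/-- `B ⊗ 1`. -/
def BI (B : Matrix (Fin de) (Fin de) ℂ) (n : ℕ) : Matrix (Fin de × Fin n) (Fin de × Fin n) ℂ :=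
  fun P Q => if P.2 = Q.2 then B P.1 Q.1 else 0

/-- `ω' ⊗ id` applied to the `ee`-corner of `N`. -/
def Wmat (ω' : Matrix (Fin de) (Fin de) ℂ → Matrix (Fin dg) (Fin dg) ℂ)
    (N : Matrix ((Fin de ⊕ Fin dg) × Fin n) ((Fin de ⊕ Fin dg) × Fin n) ℂ) :
    Matrix (Fin dg × Fin n) (Fin dg × Fin n) ℂ :=
  fun P Q => ω' (fun i j => N (Sum.inl i, P.2) (Sum.inl j, Q.2)) P.1 Q.1

def eqvf : ((Fin de ⊕ Fin dg) × Fin n) → ((Fin de × Fin n) ⊕ (Fin dg × Fin n)) :=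
  fun P => match P.1 with
    | .inl a => .inl (a, P.2)
    | .inr g => .inr (g, P.2)

lemma ed_tensor_blocks (φ : Matrix (Fin de) (Fin de) ℂ → Matrix (Fin de) (Fin de) ℂ)
    (ω' : Matrix (Fin de) (Fin de) ℂ → Matrix (Fin dg) (Fin dg) ℂ)
    (B : Matrix (Fin de) (Fin de) ℂ)
    (N : Matrix ((Fin de ⊕ Fin dg) × Fin n) ((Fin de ⊕ Fin dg) × Fin n) ℂ) :
    tensorAux (EDMap φ ω' B 1) n N =
      (fromBlocks (tensorAux φ n (Nee N)) (BI B n * Neg N) (Nge N * (BI B n)ᴴ)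
        (Ngg N + Wmat ω' N)).submatrix eqvf eqvf := by
  ext ⟨s, p⟩ ⟨t, q⟩
  rcases s with a | g <;> rcases t with b | t
  · rfl
  · show (B * (Matrix.of fun i j => N (i, p) (j, q)).toBlocks₁₂) a t = _
    simp only [Matrix.mul_apply, submatrix_apply, eqvf, fromBlocks_apply₁₂, BI, Neg,
      toBlocks₁₂, Matrix.of_apply, submatrix_apply, ein, gin, Fintype.sum_prod_type, ite_mul,
      zero_mul]
    rw [Finset.sum_comm]
    simp
  · show ((Matrix.of fun i j => N (i, p) (j, q)).toBlocks₂₁ * Bᴴ) g b = _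
    simp only [Matrix.mul_apply, submatrix_apply, eqvf, fromBlocks_apply₂₁, BI, Nge,
      toBlocks₂₁, Matrix.of_apply, submatrix_apply, ein, gin, Fintype.sum_prod_type,
      conjTranspose_apply, apply_ite (star : ℂ → ℂ), star_zero, mul_ite, mul_zero]
    rw [Finset.sum_comm]
    simp
  · show ((1 : ℂ) • (Matrix.of fun i j => N (i, p) (j, q)).toBlocks₂₂
        + ω' (Matrix.of fun i j => N (i, p) (j, q)).toBlocks₁₁) g t = _
    simp only [one_smul, Matrix.add_apply, submatrix_apply, eqvf, fromBlocks_apply₂₂, Ngg,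
      Wmat, toBlocks₂₂, toBlocks₁₁, Matrix.of_apply, submatrix_apply, gin]
    rfl

end Blocks


section Helpers

variable {de dg n : ℕ}

lemma star_sum_elim {m o : Type*} (u : m → ℂ) (x : o → ℂ) :
    star (Sum.elim u x) = Sum.elim (star u) (star x) :=
  funext fun P => by cases P <;> rfl

lemma psd_diag {m : Type*} [Fintype m] [DecidableEq m] {A : Matrix m m ℂ}
    (hA : A.PosSemidef) (i : m) : 0 ≤ A i i := by
  have := hA.dotProduct_mulVec_nonneg (Pi.single i 1)
  simpa [mulVec_single, dotProduct, Pi.single_apply, apply_ite (star : ℂ → ℂ)] using this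

lemma BI_mul_entry {k : Type*} (B : Matrix (Fin de) (Fin de) ℂ)
    (M : Matrix (Fin de × Fin n) k ℂ) (a : Fin de) (p : Fin n) (Q : k) :
    (BI B n * M) (a, p) Q = ∑ c, B a c * M (c, p) Q := by
  rw [Matrix.mul_apply, Fintype.sum_prod_type]
  simp [BI, ite_mul]

lemma mul_BIH_entry {k : Type*} [Fintype k] (B : Matrix (Fin de) (Fin de) ℂ)
    (M : Matrix k (Fin de × Fin n) ℂ) (b : Fin de) (q : Fin n) (P : k) :
    (M * (BI B n)ᴴ) P (b, q) = ∑ d, M P (d, q) * star (B b d) := by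
  rw [Matrix.mul_apply, Fintype.sum_prod_type]
  simp only [conjTranspose_apply, BI, apply_ite (star : ℂ → ℂ), star_zero, mul_ite, mul_zero]
  simp

lemma BI_conj_entry (B : Matrix (Fin de) (Fin de) ℂ)
    (M : Matrix (Fin de × Fin n) (Fin de × Fin n) ℂ) (a b : Fin de) (p q : Fin n) :
    (BI B n * M * (BI B n)ᴴ) (a, p) (b, q)
      = (B * (Matrix.of fun i j => M (i, p) (j, q)) * Bᴴ) a b := by
  rw [mul_BIH_entry]
  simp only [BI_mul_entry]
  simp [Matrix.mul_apply, conjTranspose_apply]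

lemma tensor_sub (φ : Matrix (Fin de) (Fin de) ℂ → Matrix (Fin de) (Fin de) ℂ)
    (B : Matrix (Fin de) (Fin de) ℂ) (M : Matrix (Fin de × Fin n) (Fin de × Fin n) ℂ) :
    tensorAux (fun X => φ X - B * X * Bᴴ) n M
      = tensorAux φ n M - BI B n * M * (BI B n)ᴴ := by
  ext ⟨a, p⟩ ⟨b, q⟩
  rw [Matrix.sub_apply]
  show (φ (Matrix.of fun i j => M (i, p) (j, q))
      - B * (Matrix.of fun i j => M (i, p) (j, q)) * Bᴴ) a b = _
  rw [Matrix.sub_apply, BI_conj_entry]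
  rfl

lemma BI_quad (B : Matrix (Fin de) (Fin de) ℂ) (v u : Fin de × Fin n → ℂ) :
    star v ⬝ᵥ (BI B n *ᵥ u) = star ((BI B n)ᴴ *ᵥ v) ⬝ᵥ u := by
  rw [dotProduct_mulVec, star_mulVec, conjTranspose_conjTranspose]

end Helpers


section Backward

open Kronecker

variable {de dg n : ℕ}

lemma quad_expand {m : Type*} [Fintype m] (T : Matrix m m ℂ) (z : m → ℂ) :
    star z ⬝ᵥ T *ᵥ z = ∑ P, ∑ Q, star (z P) * (T P Q * z Q) := by
  simp [dotProduct, mulVec, Finset.mul_sum]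

lemma kronecker_psd {m o : Type*} [Fintype m] [Fintype o] [DecidableEq m] [DecidableEq o]
    {A : Matrix m m ℂ} {D : Matrix o o ℂ} (hA : A.PosSemidef) (hD : D.PosSemidef) :
    (A ⊗ₖ D).PosSemidef := by
  obtain ⟨C, rfl⟩ : ∃ C : Matrix m m ℂ, A = Cᴴ * C := by
    open scoped MatrixOrder in exact CStarAlgebra.nonneg_iff_eq_star_mul_self.mp hA.nonneg
  obtain ⟨F, rfl⟩ : ∃ F : Matrix o o ℂ, D = Fᴴ * F := by
    open scoped MatrixOrder in exact CStarAlgebra.nonneg_iff_eq_star_mul_self.mp hD.nonneg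
  have h : (Cᴴ * C) ⊗ₖ (Fᴴ * F) = (C ⊗ₖ F)ᴴ * (C ⊗ₖ F) := by
    rw [mul_kronecker_mul]
    congr 1
    ext ⟨i, j⟩ ⟨k, l⟩
    simp [conjTranspose_apply, kroneckerMap_apply, mul_comm]
  rw [h]
  exact posSemidef_conjTranspose_mul_self _

/-- The linear functional `X ↦ tr X - tr (φ X)`. -/
def fL (φ : Matrix (Fin de) (Fin de) ℂ →ₗ[ℂ] Matrix (Fin de) (Fin de) ℂ) :
    Matrix (Fin de) (Fin de) ℂ →ₗ[ℂ] ℂ :=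
  Matrix.traceLinearMap (Fin de) ℂ ℂ - (Matrix.traceLinearMap (Fin de) ℂ ℂ).comp φ

lemma fL_apply (φ : Matrix (Fin de) (Fin de) ℂ →ₗ[ℂ] Matrix (Fin de) (Fin de) ℂ)
    (X : Matrix (Fin de) (Fin de) ℂ) : fL φ X = X.trace - (φ X).trace := rfl

lemma fL_nonneg (φ : Matrix (Fin de) (Fin de) ℂ →ₗ[ℂ] Matrix (Fin de) (Fin de) ℂ)
    (htr : ∀ X : Matrix (Fin de) (Fin de) ℂ, X.PosSemidef → (φ X).trace ≤ X.trace)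
    (X : Matrix (Fin de) (Fin de) ℂ) (hX : X.PosSemidef) : 0 ≤ fL φ X := by
  rw [fL_apply]
  exact sub_nonneg.mpr (htr X hX)

def etamat (de : ℕ) (η : Fin n → ℂ) : Matrix (Fin de × Fin n) (Fin de) ℂ :=
  fun P j => if P.1 = j then η P.2 else 0

lemma mul_etamat_entry {k : Type*} (η : Fin n → ℂ)
    (M : Matrix k (Fin de × Fin n) ℂ) (P : k) (j : Fin de) :
    (M * etamat de η) P j = ∑ q, M P (j, q) * η q := by
  rw [Matrix.mul_apply, Fintype.sum_prod_type, Finset.sum_comm]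
  simp [etamat, mul_ite]

lemma etamatH_mul_entry {k : Type*} [Fintype k] (η : Fin n → ℂ)
    (M : Matrix (Fin de × Fin n) k ℂ) (i : Fin de) (Q : k) :
    ((etamat de η)ᴴ * M) i Q = ∑ p, star (η p) * M (i, p) Q := by
  rw [Matrix.mul_apply, Fintype.sum_prod_type, Finset.sum_comm]
  simp only [conjTranspose_apply, etamat, apply_ite (star : ℂ → ℂ), star_zero, ite_mul, zero_mul]
  rw [Finset.sum_comm]
  simp

lemma etamat_conj_eq_sum (η : Fin n → ℂ) (N' : Matrix (Fin de × Fin n) (Fin de × Fin n) ℂ) :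
    (etamat de η)ᴴ * N' * etamat de η
      = ∑ p, ∑ q, (star (η p) * η q) • (Matrix.of fun i j => N' (i, p) (j, q)) := by
  ext i j
  rw [Matrix.mul_assoc, etamatH_mul_entry]
  simp only [Matrix.sum_apply, Matrix.smul_apply, Matrix.of_apply, smul_eq_mul,
    mul_etamat_entry]
  refine Finset.sum_congr rfl fun p _ => ?_
  rw [Finset.mul_sum]
  refine Finset.sum_congr rfl fun q _ => ?_
  ring

/-- The "partial trace" matrix `L p q = fL (N'(·,p)(·,q))` is PSD. -/
lemma Lmat_psd (φ : Matrix (Fin de) (Fin de) ℂ →ₗ[ℂ] Matrix (Fin de) (Fin de) ℂ)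
    (htr : ∀ X : Matrix (Fin de) (Fin de) ℂ, X.PosSemidef → (φ X).trace ≤ X.trace)
    (N' : Matrix (Fin de × Fin n) (Fin de × Fin n) ℂ) (hN' : N'.PosSemidef) :
    (Matrix.of fun p q : Fin n => fL φ (Matrix.of fun i j => N' (i, p) (j, q))).PosSemidef := by
  apply psd_of_quad
  intro u
  have key : star u ⬝ᵥ ((Matrix.of fun p q : Fin n =>
        fL φ (Matrix.of fun i j => N' (i, p) (j, q))) *ᵥ u)
      = fL φ ((etamat de u)ᴴ * N' * etamat de u) := by
    rw [etamat_conj_eq_sum, map_sum, quad_expand]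
    refine Finset.sum_congr rfl fun p _ => ?_
    rw [map_sum]
    refine Finset.sum_congr rfl fun q _ => ?_
    simp only [LinearMap.map_smul, smul_eq_mul, Matrix.of_apply]
    ring
  rw [key]
  exact fL_nonneg φ htr _ (hN'.conjTranspose_mul_mul_same _)

lemma Wmat_eq (φ : Matrix (Fin de) (Fin de) ℂ →ₗ[ℂ] Matrix (Fin de) (Fin de) ℂ)
    (Ω : Matrix (Fin dg) (Fin dg) ℂ)
    (N : Matrix ((Fin de ⊕ Fin dg) × Fin n) ((Fin de ⊕ Fin dg) × Fin n) ℂ) :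
    Wmat (fun Xee => (Xee.trace - (φ Xee).trace) • Ω) N
      = Ω ⊗ₖ (Matrix.of fun p q : Fin n => fL φ (Matrix.of fun i j => Nee N (i, p) (j, q))) := by
  ext ⟨s, p⟩ ⟨t, q⟩
  show ((_ : ℂ) • Ω) s t = _
  simp only [Matrix.smul_apply, kroneckerMap_apply, Matrix.of_apply, smul_eq_mul, fL_apply]
  rw [mul_comm]
  rfl

def sumin : (Fin de × Fin n) ⊕ (Fin dg × Fin n) → (Fin de ⊕ Fin dg) × Fin n :=
  Sum.elim ein gin

lemma Nre_eq (N : Matrix ((Fin de ⊕ Fin dg) × Fin n) ((Fin de ⊕ Fin dg) × Fin n) ℂ) :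
    fromBlocks (Nee N) (Neg N) (Nge N) (Ngg N) = N.submatrix sumin sumin := by
  ext P Q
  rcases P with P | P <;> rcases Q with Q | Q <;> rfl

lemma backward_cp (φ : Matrix (Fin de) (Fin de) ℂ →ₗ[ℂ] Matrix (Fin de) (Fin de) ℂ)
    (B : Matrix (Fin de) (Fin de) ℂ) (Ω : Matrix (Fin dg) (Fin dg) ℂ) (hΩ : Ω.PosSemidef)
    (hψ : IsCompletelyPositive (fun X : Matrix (Fin de) (Fin de) ℂ => φ X - B * X * Bᴴ))
    (htr : ∀ X : Matrix (Fin de) (Fin de) ℂ, X.PosSemidef → (φ X).trace ≤ X.trace) :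
    IsCompletelyPositive (EDMap ⇑φ (fun Xee => (Xee.trace - (φ Xee).trace) • Ω) B 1) := by
  intro n N hN
  rw [ed_tensor_blocks]
  refine Matrix.PosSemidef.submatrix ?_ eqvf
  set ω' := fun Xee : Matrix (Fin de) (Fin de) ℂ => (Xee.trace - (φ Xee).trace) • Ω with hω'
  have hNee : (Nee N).PosSemidef := hN.submatrix ein
  have hW : (Wmat ω' N).PosSemidef := by
    rw [hω', Wmat_eq]
    exact kronecker_psd hΩ (Lmat_psd φ htr (Nee N) hNee)
  have h1 : (fromBlocks (tensorAux (fun X => φ X - B * X * Bᴴ) n (Nee N)) 0 0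
      (Wmat ω' N)).PosSemidef :=
    psd_fromBlocks_diag (hψ n _ hNee) hW
  have hNre : (fromBlocks (Nee N) (Neg N) (Nge N) (Ngg N)).PosSemidef := by
    rw [Nre_eq]
    exact hN.submatrix sumin
  have h2 : ((fromBlocks (BI B n) 0 0 (1 : Matrix (Fin dg × Fin n) (Fin dg × Fin n) ℂ))
        * (fromBlocks (Nee N) (Neg N) (Nge N) (Ngg N))
        * (fromBlocks (BI B n) 0 0 (1 : Matrix (Fin dg × Fin n) (Fin dg × Fin n) ℂ))ᴴ).PosSemidef :=
    hNre.mul_mul_conjTranspose_same _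
  have hsplit : fromBlocks (tensorAux (⇑φ) n (Nee N)) (BI B n * Neg N) (Nge N * (BI B n)ᴴ)
        (Ngg N + Wmat ω' N)
      = fromBlocks (tensorAux (fun X => φ X - B * X * Bᴴ) n (Nee N)) 0 0 (Wmat ω' N)
        + (fromBlocks (BI B n) 0 0 (1 : Matrix (Fin dg × Fin n) (Fin dg × Fin n) ℂ))
          * (fromBlocks (Nee N) (Neg N) (Nge N) (Ngg N))
          * (fromBlocks (BI B n) 0 0 (1 : Matrix (Fin dg × Fin n) (Fin dg × Fin n) ℂ))ᴴ := by
    rw [fromBlocks_conjTranspose, fromBlocks_multiply, fromBlocks_multiply, tensor_sub,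
      fromBlocks_add]
    simp only [Matrix.mul_zero, Matrix.zero_mul, add_zero, zero_add,
      Matrix.one_mul, Matrix.mul_one, conjTranspose_zero, conjTranspose_one]
    rw [Matrix.fromBlocks_inj]
    refine ⟨?_, rfl, rfl, add_comm _ _⟩
    rw [Matrix.mul_assoc, sub_add_cancel]
  rw [hsplit]
  exact h1.add h2

end Backward


section Forward

variable {de dg n : ℕ}

lemma ed_trace (φ : Matrix (Fin de) (Fin de) ℂ →ₗ[ℂ] Matrix (Fin de) (Fin de) ℂ)
    (B : Matrix (Fin de) (Fin de) ℂ) (Ω : Matrix (Fin dg) (Fin dg) ℂ) (hΩtr : Ω.trace = 1)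
    (X : Matrix (Fin de ⊕ Fin dg) (Fin de ⊕ Fin dg) ℂ) :
    (EDMap ⇑φ (fun Xee => (Xee.trace - (φ Xee).trace) • Ω) B 1 X).trace = X.trace := by
  rw [trace_sum_type, trace_sum_type X]
  simp only [EDMap, toBlocks_fromBlocks₁₁, toBlocks_fromBlocks₂₂, trace_add, trace_smul,
    hΩtr, smul_eq_mul, mul_one, Complex.ofReal_one, one_smul]
  ring

lemma star_single {ι : Type*} [DecidableEq ι] (i : ι) (c : ℂ) :
    star (Pi.single i c : ι → ℂ) = Pi.single i (star c) := by
  funext j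
  rcases eq_or_ne j i with rfl | h
  · simp
  · simp [Pi.single_eq_of_ne h]

lemma forward_tni (φ : Matrix (Fin de) (Fin de) ℂ →ₗ[ℂ] Matrix (Fin de) (Fin de) ℂ)
    (B : Matrix (Fin de) (Fin de) ℂ) (Ω : Matrix (Fin dg) (Fin dg) ℂ) (hΩtr : Ω.trace = 1)
    (hCP : IsCompletelyPositive (EDMap ⇑φ (fun Xee => (Xee.trace - (φ Xee).trace) • Ω) B 1)) :
    ∀ X : Matrix (Fin de) (Fin de) ℂ, X.PosSemidef → (φ X).trace ≤ X.trace := by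
  intro X hX
  have h2 := cp_pos hCP _ (psd_fromBlocks_diag hX (Matrix.PosSemidef.zero
    (n := Fin dg) (R := ℂ)))
  have h3 := h2.submatrix Sum.inr
  have h4 : (EDMap ⇑φ (fun Xee => (Xee.trace - (φ Xee).trace) • Ω) B 1
        (fromBlocks X 0 0 0)).submatrix Sum.inr Sum.inr = (X.trace - (φ X).trace) • Ω := by
    ext i j
    simp [EDMap, toBlocks_fromBlocks₁₁, toBlocks_fromBlocks₂₂]
  rw [h4] at h3
  have h5 := psd_trace_nonneg h3
  rw [trace_smul, hΩtr, smul_eq_mul, mul_one] at h5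
  exact sub_nonneg.mp h5

lemma nonneg_of_forall_eps (x ρ : ℂ) (hρ : 0 ≤ ρ)
    (h : ∀ s : ℝ, 0 < s → 0 ≤ x + ((s⁻¹ * s⁻¹ : ℝ) : ℂ) * ρ) : 0 ≤ x := by
  have hρre : 0 ≤ ρ.re := (Complex.le_def.mp hρ).1
  have hρim : ρ.im = 0 := ((Complex.le_def.mp hρ).2).symm
  rw [Complex.le_def]
  have him : x.im = 0 := by
    have h1 := ((Complex.le_def.mp (h 1 one_pos)).2).symm
    simpa [Complex.add_im, hρim] using h1
  refine ⟨?_, him.symm⟩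
  simp only [Complex.zero_re]
  by_contra hc
  push_neg at hc
  set ε := -x.re with hε'
  have hε : 0 < ε := by simp [hε']; linarith
  set s := Real.sqrt ((ρ.re + 1) / ε) with hs'
  have hpos : 0 < (ρ.re + 1) / ε := by positivity
  have hs : 0 < s := Real.sqrt_pos.mpr hpos
  have h2 := (Complex.le_def.mp (h s hs)).1
  have hre : (x + ((s⁻¹ * s⁻¹ : ℝ) : ℂ) * ρ).re = x.re + (s⁻¹ * s⁻¹) * ρ.re := by
    simp [Complex.add_re, Complex.ofReal_mul]
  rw [hre] at h2
  have hssq : s * s = (ρ.re + 1) / ε := Real.mul_self_sqrt hpos.le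
  have hinv : s⁻¹ * s⁻¹ = ε / (ρ.re + 1) := by
    rw [← mul_inv, hssq]
    field_simp
  rw [hinv] at h2
  have hlt : ε / (ρ.re + 1) * ρ.re < ε := by
    rw [div_mul_eq_mul_div, div_lt_iff₀ (by linarith)]
    nlinarith
  simp only [Complex.zero_re] at h2
  linarith

end Forward


section ForwardCP

variable {de dg n : ℕ}

def Jmat (g0 : Fin dg) (p0 : Fin n) (s : ℝ) (w : Fin de × Fin n → ℂ) :
    Matrix (Fin de × Fin n) ((Fin de ⊕ Fin dg) × Fin n) ℂ :=
  fun P Q => Sum.elim (fun b => if P = (b, Q.2) then (1 : ℂ) else 0)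
    (fun t => if (t, Q.2) = (g0, p0) then -(s : ℂ) * w P else 0) Q.1

lemma MJ_inl (M : Matrix (Fin de × Fin n) (Fin de × Fin n) ℂ) (g0 : Fin dg) (p0 : Fin n)
    (s : ℝ) (w : Fin de × Fin n → ℂ) (P : Fin de × Fin n) (b : Fin de) (q : Fin n) :
    (M * Jmat g0 p0 s w) P (Sum.inl b, q) = M P (b, q) := by
  rw [Matrix.mul_apply]
  simp [Jmat, mul_ite]

lemma MJ_inr (M : Matrix (Fin de × Fin n) (Fin de × Fin n) ℂ) (g0 : Fin dg) (p0 : Fin n)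
    (s : ℝ) (w : Fin de × Fin n → ℂ) (P : Fin de × Fin n) (t : Fin dg) (q : Fin n) :
    (M * Jmat g0 p0 s w) P (Sum.inr t, q)
      = if (t, q) = (g0, p0) then -(s : ℂ) * (M *ᵥ w) P else 0 := by
  rw [Matrix.mul_apply]
  by_cases h : (t, q) = (g0, p0)
  · simp only [Jmat, Sum.elim_inr, h, if_true]
    rw [mulVec, dotProduct, Finset.mul_sum]
    refine Finset.sum_congr rfl fun P1 _ => ?_
    ring
  · simp only [Jmat, Sum.elim_inr, if_neg h, mul_zero, Finset.sum_const_zero]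

lemma JH_inl (g0 : Fin dg) (p0 : Fin n) (s : ℝ) (w : Fin de × Fin n → ℂ)
    (M' : Matrix (Fin de × Fin n) ((Fin de ⊕ Fin dg) × Fin n) ℂ)
    (a : Fin de) (p : Fin n) (Q' : (Fin de ⊕ Fin dg) × Fin n) :
    ((Jmat g0 p0 s w)ᴴ * M') (Sum.inl a, p) Q' = M' (a, p) Q' := by
  rw [Matrix.mul_apply]
  simp [Jmat, conjTranspose_apply, apply_ite (star : ℂ → ℂ), ite_mul]

lemma JH_inr (g0 : Fin dg) (p0 : Fin n) (s : ℝ) (w : Fin de × Fin n → ℂ)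
    (M' : Matrix (Fin de × Fin n) ((Fin de ⊕ Fin dg) × Fin n) ℂ)
    (Q' : (Fin de ⊕ Fin dg) × Fin n) :
    ((Jmat g0 p0 s w)ᴴ * M') (Sum.inr g0, p0) Q'
      = -(s : ℂ) * ∑ P, star (w P) * M' P Q' := by
  rw [Matrix.mul_apply, Finset.mul_sum]
  refine Finset.sum_congr rfl fun P _ => ?_
  simp only [conjTranspose_apply, Jmat, Sum.elim_inr, eq_self_iff_true, if_true, star_mul',
    star_neg, RCLike.star_def, Complex.conj_ofReal]
  ring

lemma forward_cp (hdg : 0 < dg)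
    (φ : Matrix (Fin de) (Fin de) ℂ →ₗ[ℂ] Matrix (Fin de) (Fin de) ℂ)
    (B : Matrix (Fin de) (Fin de) ℂ) (Ω : Matrix (Fin dg) (Fin dg) ℂ)
    (hΩ : Ω.PosSemidef)
    (hCP : IsCompletelyPositive (EDMap ⇑φ (fun Xee => (Xee.trace - (φ Xee).trace) • Ω) B 1))
    (htni : ∀ X : Matrix (Fin de) (Fin de) ℂ, X.PosSemidef → (φ X).trace ≤ X.trace) :
    IsCompletelyPositive (fun X : Matrix (Fin de) (Fin de) ℂ => φ X - B * X * Bᴴ) := by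
  intro n M hM
  apply psd_of_quad
  intro v
  rw [show (tensorAux (fun X : Matrix (Fin de) (Fin de) ℂ => φ X - B * X * Bᴴ) n M)
      = tensorAux ⇑φ n M - BI B n * M * (BI B n)ᴴ from tensor_sub ⇑φ B M]
  rcases Nat.eq_zero_or_pos n with rfl | hn
  · simp [dotProduct]
  rw [Matrix.sub_mulVec, dotProduct_sub]
  set w := (BI B n)ᴴ *ᵥ v with hw
  have hc : star v ⬝ᵥ (BI B n * M * (BI B n)ᴴ) *ᵥ v = star w ⬝ᵥ M *ᵥ w := by
    rw [← Matrix.mulVec_mulVec, ← Matrix.mulVec_mulVec, BI_quad]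
  rw [hc]
  set g0 : Fin dg := ⟨0, hdg⟩
  set p0 : Fin n := ⟨0, hn⟩
  set ρ := fL φ (Matrix.of fun i j => M (i, p0) (j, p0)) * Ω g0 g0 with hρdef
  have hρ : 0 ≤ ρ :=
    mul_nonneg (fL_nonneg φ htni _ (hM.submatrix fun i => (i, p0))) (psd_diag hΩ g0)
  apply nonneg_of_forall_eps _ ρ hρ
  intro s hs
  have hsC : (s : ℂ) ≠ 0 := by exact_mod_cast hs.ne'
  set J := Jmat g0 p0 s w with hJ
  have hNpsd : (Jᴴ * M * J).PosSemidef := hM.conjTranspose_mul_mul_same J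
  have hT := hCP n _ hNpsd
  rw [ed_tensor_blocks] at hT
  set N := Jᴴ * M * J with hN
  have hassoc : ∀ P Q, N P Q = (Jᴴ * (M * J)) P Q := fun P Q => by
    rw [hN, Matrix.mul_assoc]
  have E1 : Nee N = M := by
    ext ⟨a, p⟩ ⟨b, q⟩
    show N (Sum.inl a, p) (Sum.inl b, q) = M (a, p) (b, q)
    rw [hassoc, hJ, JH_inl, MJ_inl]
  have E2 : ∀ P : Fin de × Fin n, Neg N P (g0, p0) = -(s : ℂ) * (M *ᵥ w) P := by
    rintro ⟨a, p⟩
    show N (Sum.inl a, p) (Sum.inr g0, p0) = _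
    rw [hassoc, hJ, JH_inl, MJ_inr, if_pos rfl]

  have E3 : ∀ P : Fin de × Fin n, Nge N (g0, p0) P = -(s : ℂ) * (star w ᵥ* M) P := by
    rintro ⟨b, q⟩
    show N (Sum.inr g0, p0) (Sum.inl b, q) = _
    rw [hassoc, hJ, JH_inr]
    simp only [MJ_inl]
    rfl
  have E4 : Ngg N (g0, p0) (g0, p0) = (s : ℂ) * ((s : ℂ) * (star w ⬝ᵥ M *ᵥ w)) := by
    show N (Sum.inr g0, p0) (Sum.inr g0, p0) = _
    rw [hassoc, hJ, JH_inr]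
    simp only [MJ_inr, eq_self_iff_true, if_true]
    rw [dotProduct, Finset.mul_sum, Finset.mul_sum, Finset.mul_sum]
    refine Finset.sum_congr rfl fun P _ => ?_
    simp only [Pi.star_apply]
    ring
  have hFps : (fromBlocks (tensorAux ⇑φ n (Nee N)) (BI B n * Neg N) (Nge N * (BI B n)ᴴ)
      (Ngg N + Wmat (fun Xee => (Xee.trace - (φ Xee).trace) • Ω) N)).PosSemidef := by
    have h := hT.submatrix sumin
    rwa [Matrix.submatrix_submatrix,
      show eqvf ∘ (sumin (de := de) (dg := dg) (n := n)) = id from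
        funext fun P => by rcases P with ⟨a, p⟩ | ⟨g, p⟩ <;> rfl,
      Matrix.submatrix_id_id] at h
  set vG : Fin dg × Fin n → ℂ := Pi.single (g0, p0) ((s⁻¹ : ℝ) : ℂ) with hvG
  have key := hFps.dotProduct_mulVec_nonneg (Sum.elim v vG)
  rw [fromBlocks_mulVec, star_sum_elim, sumElim_dotProduct_sumElim, dotProduct_add,
    dotProduct_add] at key
  simp only [Sum.elim_comp_inl, Sum.elim_comp_inr] at key
  have T1 : star v ⬝ᵥ tensorAux ⇑φ n (Nee N) *ᵥ v = star v ⬝ᵥ tensorAux ⇑φ n M *ᵥ v := by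
    rw [E1]
  have T2 : star v ⬝ᵥ (BI B n * Neg N) *ᵥ vG = -(star w ⬝ᵥ M *ᵥ w) := by
    rw [← Matrix.mulVec_mulVec, hvG, Matrix.mulVec_single]
    change star v ⬝ᵥ BI B n *ᵥ (fun P => Neg N P (g0, p0) * ((s⁻¹ : ℝ) : ℂ)) = _
    have hvec : (fun P => Neg N P (g0, p0) * ((s⁻¹ : ℝ) : ℂ)) = -(M *ᵥ w) := by
      funext P
      rw [E2, Pi.neg_apply]
      push_cast
      field_simp
    rw [hvec, Matrix.mulVec_neg, dotProduct_neg, BI_quad]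
  have T3 : star vG ⬝ᵥ (Nge N * (BI B n)ᴴ) *ᵥ v = -(star w ⬝ᵥ M *ᵥ w) := by
    rw [hvG, star_single, single_dotProduct]
    have hval : ((Nge N * (BI B n)ᴴ) *ᵥ v) (g0, p0) = -(s : ℂ) * (star w ⬝ᵥ M *ᵥ w) := by
      rw [← Matrix.mulVec_mulVec, ← hw]
      show Nge N (g0, p0) ⬝ᵥ w = _
      conv_rhs => rw [dotProduct_mulVec]
      rw [dotProduct, dotProduct, Finset.mul_sum]
      refine Finset.sum_congr rfl fun P _ => ?_
      rw [E3]
      ring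
    rw [hval]
    simp only [RCLike.star_def, Complex.conj_ofReal]
    push_cast
    field_simp
  have T4 : star vG ⬝ᵥ (Ngg N + Wmat (fun Xee => (Xee.trace - (φ Xee).trace) • Ω) N) *ᵥ vG
      = star w ⬝ᵥ M *ᵥ w + ((s⁻¹ * s⁻¹ : ℝ) : ℂ) * ρ := by
    have hWval : Wmat (fun Xee => (Xee.trace - (φ Xee).trace) • Ω) N (g0, p0) (g0, p0) = ρ := by
      show ((Matrix.trace (Matrix.of fun i j => N (Sum.inl i, p0) (Sum.inl j, p0))
          - Matrix.trace (φ (Matrix.of fun i j => N (Sum.inl i, p0) (Sum.inl j, p0)))) • Ω)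
            g0 g0 = ρ
      have hsl : (Matrix.of fun i j => N (Sum.inl i, p0) (Sum.inl j, p0))
          = (Matrix.of fun i j => M (i, p0) (j, p0)) := by
        ext i j
        exact congrFun (congrFun E1 (i, p0)) (j, p0)
      rw [hsl, Matrix.smul_apply, smul_eq_mul, hρdef, fL_apply]
    rw [hvG, Matrix.mulVec_single, star_single, single_dotProduct]
    change star ((s⁻¹ : ℝ) : ℂ) * ((Ngg N + Wmat (fun Xee => (Xee.trace - (φ Xee).trace) • Ω) N)
      (g0, p0) (g0, p0) * ((s⁻¹ : ℝ) : ℂ)) = _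
    rw [Matrix.add_apply, E4, hWval]
    simp only [RCLike.star_def, Complex.conj_ofReal]
    push_cast
    field_simp
  rw [T1, T2, T3, T4] at key
  refine le_of_le_of_eq key ?_
  ring

end ForwardCP

end Stmt7Aux

/-- for `ω(X_ee) = tr[X_ee − φ(X_ee)] Ω` and `γ = 1`, `Φ` is completely
positive and trace preserving iff `X ↦ φ(X) − B X B†` is completely positive and `φ` is
trace non-increasing. -/
theorem stmt_7 {de dg : ℕ} (hde : 0 < de) (hdg : 0 < dg)
    (φ : Matrix (Fin de) (Fin de) ℂ →ₗ[ℂ] Matrix (Fin de) (Fin de) ℂ)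
    (B : Matrix (Fin de) (Fin de) ℂ)
    (Ω : Matrix (Fin dg) (Fin dg) ℂ) (hΩ : Ω.PosSemidef) (hΩtr : Ω.trace = 1) :
    (IsCompletelyPositive
        (EDMap ⇑φ (fun Xee => (Xee.trace - (φ Xee).trace) • Ω) B 1) ∧
      ∀ X : Matrix (Fin de ⊕ Fin dg) (Fin de ⊕ Fin dg) ℂ,
        (EDMap ⇑φ (fun Xee => (Xee.trace - (φ Xee).trace) • Ω) B 1 X).trace = X.trace) ↔
      (IsCompletelyPositive (fun X : Matrix (Fin de) (Fin de) ℂ => φ X - B * X * Bᴴ) ∧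
        ∀ X : Matrix (Fin de) (Fin de) ℂ, X.PosSemidef → (φ X).trace ≤ X.trace) := by
  constructor
  · rintro ⟨hCP, -⟩
    have htni := Stmt7Aux.forward_tni φ B Ω hΩtr hCP
    exact ⟨Stmt7Aux.forward_cp hdg φ B Ω hΩ hCP htni, htni⟩
  · rintro ⟨hψ, htr⟩
    exact ⟨Stmt7Aux.backward_cp φ B Ω hΩ hψ htr, Stmt7Aux.ed_trace φ B Ω hΩtr⟩
end
end

section
/- Let a, b, q ∈ ℂ and γ ≥ 0, and let Φ be the linear map on 2×2 complex matrices defined by Φ([[x_ee, x_eg],[x_ge, x_gg]]) = [[|a|² x_ee, b x_eg],[b* x_ge, γ x_gg + |q|² x_ee]]. Then the following are equivalent: (i) Φ is completely positive; (ii) Φ is positive; (iii) |b| ≤ √γ |a|. -/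
open Matrix ComplexOrder
noncomputable section

/-- The qubit excitation-damping map
`Φ([[x_ee, x_eg],[x_ge, x_gg]]) = [[|a|² x_ee, b x_eg],[b* x_ge, γ x_gg + |q|² x_ee]]`. -/
def QMap (a b q : ℂ) (γ : ℝ) : Matrix (Fin 2) (Fin 2) ℂ → Matrix (Fin 2) (Fin 2) ℂ :=
  fun X => Matrix.of
    ![![((‖a‖ ^ 2 : ℝ) : ℂ) * X 0 0, b * X 0 1],
      ![(starRingEnd ℂ b) * X 1 0, (γ : ℂ) * X 1 1 + ((‖q‖ ^ 2 : ℝ) : ℂ) * X 0 0]]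

/-! ### Auxiliary material -/

/-- Kronecker product of `K` with the `n × n` identity. -/
def kronId {d : Type*} (K : Matrix d d ℂ) (n : ℕ) : Matrix (d × Fin n) (d × Fin n) ℂ :=
  fun p q => K p.1 q.1 * (if p.2 = q.2 then 1 else 0)

lemma tensor_kraus {d : Type*} [Fintype d] (K : Matrix d d ℂ) (n : ℕ)
    (M : Matrix (d × Fin n) (d × Fin n) ℂ) :
    tensorAux (fun X => K * X * Kᴴ) n M = kronId K n * M * (kronId K n)ᴴ := by
  funext p q
  simp only [tensorAux, Matrix.mul_apply, kronId, conjTranspose_apply, Fintype.sum_prod_type,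
    star_mul', mul_ite, ite_mul, one_mul, mul_one, zero_mul, mul_zero,
    Finset.sum_ite_eq, Finset.sum_ite_eq', Finset.mem_univ, if_true, apply_ite, star_one,
    star_zero]
  rfl

lemma kraus_cp {d : Type*} [Fintype d] (K : Matrix d d ℂ) :
    IsCompletelyPositive (fun X => K * X * Kᴴ) := by
  intro n M hM
  rw [tensor_kraus]
  exact hM.mul_mul_conjTranspose_same _

lemma key_real (A Bn Q γ : ℝ) (hA : 0 ≤ A) (hQ : 0 ≤ Q) (hγ : 0 ≤ γ)
    (h : ∀ s t : ℝ, 0 ≤ A * Bn * s ^ 2 - 2 * Bn * t * s + γ * t ^ 2 + Q) :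
    Bn ≤ γ * A := by
  rcases eq_or_lt_of_le hA with hA0 | hA0
  · by_contra hc
    push_neg at hc
    have hBpos : 0 < Bn := lt_of_le_of_lt (by nlinarith) hc
    have := h ((γ + Q + 1) / (2 * Bn)) 1
    rw [← hA0] at this
    have h2 : 2 * Bn * 1 * ((γ + Q + 1) / (2 * Bn)) = γ + Q + 1 := by
      field_simp
    nlinarith [this]
  · refine le_of_forall_pos_le_add fun ε hε => ?_
    set t : ℝ := Real.sqrt (A * Q / ε) + 1 with ht
    have ht1 : 1 ≤ t := by rw [ht]; linarith [Real.sqrt_nonneg (A * Q / ε)]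
    have ht0 : 0 < t := by linarith
    have ht2 : A * Q / ε ≤ t ^ 2 := by
      have := Real.sq_sqrt (by positivity : (0:ℝ) ≤ A * Q / ε)
      nlinarith [Real.sqrt_nonneg (A * Q / ε)]
    have hAQ : A * Q ≤ ε * t ^ 2 := by
      rw [div_le_iff₀ hε] at ht2; linarith [ht2]
    have hst := h (t / A) t
    have hexp : A * Bn * (t / A) ^ 2 - 2 * Bn * t * (t / A) + γ * t ^ 2 + Q
        = -(Bn * t ^ 2) / A + γ * t ^ 2 + Q := by
      field_simp; ring
    rw [hexp] at hst
    have h3 : Bn * t ^ 2 ≤ γ * A * t ^ 2 + A * Q := by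
      have := mul_le_mul_of_nonneg_left hst (le_of_lt hA0)
      rw [mul_zero] at this
      have hAne : A ≠ 0 := ne_of_gt hA0
      field_simp at this
      nlinarith [this]
    have h4 : Bn * t ^ 2 ≤ (γ * A + ε) * t ^ 2 := by nlinarith
    have ht2pos : 0 < t ^ 2 := by positivity
    exact le_of_mul_le_mul_right h4 ht2pos

lemma pos_imp_ineq (a b q : ℂ) (γ : ℝ) (hγ : 0 ≤ γ)
    (hpos : IsPositiveMap (QMap a b q γ)) : ‖b‖ ^ 2 ≤ γ * ‖a‖ ^ 2 := by
  have key : ∀ s t : ℝ,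
      0 ≤ ‖a‖^2 * ‖b‖^2 * s ^ 2 - 2 * ‖b‖^2 * t * s + γ * t ^ 2 + ‖q‖^2 := by
    intro s t
    set B : Matrix (Fin 1) (Fin 2) ℂ := Matrix.of ![![1, (t:ℂ)]] with hB
    have hM : (Bᴴ * B).PosSemidef := posSemidef_conjTranspose_mul_self B
    have hQ := hpos _ hM
    have hv := hQ.dotProduct_mulVec_nonneg ![(-b * (s:ℂ)), 1]
    have hval : star (![(-b * (s:ℂ)), 1]) ⬝ᵥ
        (QMap a b q γ (Bᴴ * B) *ᵥ ![(-b * (s:ℂ)), 1])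
        = ((‖a‖^2 * ‖b‖^2 * s ^ 2 - 2 * ‖b‖^2 * t * s + γ * t ^ 2 + ‖q‖^2 : ℝ) : ℂ) := by
      have hbb : b * starRingEnd ℂ b = ((‖b‖^2 : ℝ) : ℂ) := by
        rw [Complex.mul_conj]; norm_cast
        simp [Complex.normSq_eq_norm_sq]
      push_cast at hbb ⊢
      simp only [QMap, hB, dotProduct, mulVec, Matrix.mul_apply, conjTranspose_apply,
        Fin.sum_univ_two, Matrix.of_apply, Matrix.cons_val', Matrix.cons_val_zero,
        Matrix.cons_val_one, Matrix.head_cons, Matrix.head_fin_const, Matrix.empty_val',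
        Matrix.cons_val_fin_one, Pi.star_apply, star_mul', star_neg, star_one,
        RingHom.id_apply, Complex.star_def, Complex.conj_conj]
      push_cast
      ring_nf
      rw [Complex.conj_ofReal]
      ring_nf
      simp only [_root_.map_one, map_neg, _root_.map_mul, Complex.conj_conj,
        Complex.conj_ofReal, Fin.sum_univ_one, one_mul]
      linear_combination ((s:ℂ)^2 * ((‖a‖:ℂ))^2 - 2 * (s:ℂ) * (t:ℂ)) * hbb
    rw [hval] at hv
    exact_mod_cast hv
  exact key_real (‖a‖^2) (‖b‖^2) (‖q‖^2) γ (by positivity) (by positivity) hγ key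

lemma kraus_decomp (a b q : ℂ) (γ : ℝ) (hγ : 0 ≤ γ) (hc : ‖b‖^2 ≤ γ * ‖a‖^2) :
    ∃ K₁ K₂ K₃ : Matrix (Fin 2) (Fin 2) ℂ, ∀ X,
      QMap a b q γ X = K₁ * X * K₁ᴴ + K₂ * X * K₂ᴴ + K₃ * X * K₃ᴴ := by
  set β : ℂ := if a = 0 then 0 else (starRingEnd ℂ b) / (‖a‖ : ℂ) with hβ
  have hβ2 : ‖β‖^2 ≤ γ := by
    rcases eq_or_ne a 0 with h | h
    · rw [hβ]; simp only [h, if_false, if_neg, norm_zero]; simpa using hγ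
    · have ha : (0:ℝ) < ‖a‖ := norm_pos_iff.mpr h
      rw [hβ, if_neg h]
      rw [norm_div]
      simp only [RingHomIsometric.norm_map]
      rw [Complex.norm_real, Real.norm_eq_abs, abs_of_pos ha, div_pow]
      rw [div_le_iff₀ (by positivity)]
      linarith [hc]
  have hab : (‖a‖ : ℂ) * (starRingEnd ℂ β) = b := by
    rcases eq_or_ne a 0 with h | h
    · have hb0 : b = 0 := by
        have : ‖b‖^2 ≤ 0 := by rw [h] at hc; simpa using hc
        have : ‖b‖ = 0 := by nlinarith [norm_nonneg b, sq_nonneg ‖b‖]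
        exact norm_eq_zero.mp this
      simp [hβ, h, hb0]
    · have ha : (‖a‖:ℂ) ≠ 0 := by
        simp [Complex.ofReal_ne_zero, norm_ne_zero_iff, h]
      rw [hβ, if_neg h, map_div₀, Complex.conj_conj, Complex.conj_ofReal]
      rw [mul_comm, div_mul_eq_mul_div, mul_div_assoc, div_self ha, mul_one]
  set δ : ℝ := Real.sqrt (γ - ‖β‖^2) with hδ
  have hδ2 : (δ:ℝ)^2 = γ - ‖β‖^2 := Real.sq_sqrt (by linarith)
  refine ⟨!![(‖a‖:ℂ), 0; 0, β], !![0,0; (‖q‖:ℂ), 0], !![0,0;0,(δ:ℂ)], fun X => ?_⟩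
  have hββ : β * starRingEnd ℂ β = ((‖β‖^2 : ℝ) : ℂ) := by
    rw [Complex.mul_conj]; norm_cast
    simp [Complex.normSq_eq_norm_sq]
  have hqq : (‖q‖:ℂ) * starRingEnd ℂ (‖q‖:ℂ) = ((‖q‖^2 : ℝ) : ℂ) := by
    rw [Complex.conj_ofReal]; push_cast; ring
  ext i j
  fin_cases i <;> fin_cases j <;>
    simp only [QMap, Matrix.add_apply, Matrix.mul_apply, Matrix.conjTranspose_apply,
      Fin.sum_univ_two, Matrix.of_apply, Matrix.cons_val', Matrix.cons_val_zero,
      Matrix.cons_val_one, Matrix.head_cons, Matrix.empty_val', Matrix.cons_val_fin_one,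
      Matrix.head_fin_const, Fin.isValue, Fin.zero_eta, Fin.mk_zero, Fin.mk_one,
      star_zero, _root_.map_zero, mul_zero, zero_mul, add_zero, zero_add,
      Complex.conj_ofReal, Complex.star_def]
  · push_cast; ring
  · linear_combination (-(X 0 1)) * hab
  · have : starRingEnd ℂ ((‖a‖:ℂ) * starRingEnd ℂ β) = starRingEnd ℂ b := by rw [hab]
    rw [_root_.map_mul, Complex.conj_conj, Complex.conj_ofReal] at this
    linear_combination (-(X 1 0)) * this
  · have : (δ:ℂ) * starRingEnd ℂ (δ:ℂ) = ((γ:ℂ) - ((‖β‖^2:ℝ):ℂ)) := by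
      rw [Complex.conj_ofReal]
      rw [show ((δ:ℝ):ℂ) * ((δ:ℝ):ℂ) = (((δ^2 : ℝ)):ℂ) by push_cast; ring, hδ2]
      push_cast; ring
    simp only [Complex.conj_ofReal] at this hqq ⊢
    linear_combination (-(X 1 1)) * hββ + (-(X 1 1)) * this + (-(X 0 0)) * hqq

lemma ineq_imp_cp (a b q : ℂ) (γ : ℝ) (hγ : 0 ≤ γ) (hc : ‖b‖^2 ≤ γ * ‖a‖^2) :
    IsCompletelyPositive (QMap a b q γ) := by
  obtain ⟨K₁, K₂, K₃, hK⟩ := kraus_decomp a b q γ hγ hc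
  intro n M hM
  have hsplit : tensorAux (QMap a b q γ) n M
      = tensorAux (fun X => K₁ * X * K₁ᴴ) n M + tensorAux (fun X => K₂ * X * K₂ᴴ) n M
        + tensorAux (fun X => K₃ * X * K₃ᴴ) n M := by
    funext p r
    simp only [tensorAux, Matrix.add_apply, hK]
    exact congrFun (congrFun (hK (Matrix.of fun i j => M (i, p.2) (j, r.2))) p.1) r.1
  rw [hsplit]
  exact ((kraus_cp K₁ n M hM).add (kraus_cp K₂ n M hM)).add (kraus_cp K₃ n M hM)

lemma cp_imp_pos {d e : Type*} [Fintype d] [Fintype e]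
    (Λ : Matrix d d ℂ → Matrix e e ℂ) (h : IsCompletelyPositive Λ) :
    IsPositiveMap Λ := by
  intro M hM
  have hM' : (M.submatrix (fun p : d × Fin 1 => p.1) (fun p : d × Fin 1 => p.1)).PosSemidef :=
    hM.submatrix _
  have h1 := h 1 _ hM'
  have heq : tensorAux Λ 1 (M.submatrix (fun p : d × Fin 1 => p.1) (fun p : d × Fin 1 => p.1))
      = (Λ M).submatrix (fun p : e × Fin 1 => p.1) (fun p : e × Fin 1 => p.1) := by
    funext p r
    simp only [tensorAux, Matrix.submatrix_apply]
  rw [heq] at h1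
  have := h1.submatrix (fun i : e => ((i, 0) : e × Fin 1))
  exact this

/-- for the qubit map above, complete positivity, positivity and the
condition `|b| ≤ √γ |a|` are all equivalent. -/
theorem stmt_14 (a b q : ℂ) (γ : ℝ) (hγ : 0 ≤ γ) :
    (IsCompletelyPositive (QMap a b q γ) ↔ IsPositiveMap (QMap a b q γ)) ∧
    (IsPositiveMap (QMap a b q γ) ↔ ‖b‖ ≤ Real.sqrt γ * ‖a‖) := by
  have hsq : (‖b‖ ≤ Real.sqrt γ * ‖a‖) ↔ ‖b‖^2 ≤ γ * ‖a‖^2 := by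
    constructor
    · intro h
      have h2 : ‖b‖^2 ≤ (Real.sqrt γ * ‖a‖)^2 := by
        nlinarith [norm_nonneg b, norm_nonneg a, Real.sqrt_nonneg γ]
      calc ‖b‖^2 ≤ (Real.sqrt γ * ‖a‖)^2 := h2
        _ = γ * ‖a‖^2 := by rw [mul_pow, Real.sq_sqrt hγ]
    · intro h
      have := Real.sqrt_le_sqrt h
      rw [Real.sqrt_sq (norm_nonneg b), Real.sqrt_mul hγ, Real.sqrt_sq (norm_nonneg a)] at this
      exact this
  have hcp : ‖b‖^2 ≤ γ * ‖a‖^2 → IsCompletelyPositive (QMap a b q γ) :=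
    ineq_imp_cp a b q γ hγ
  have hpi : IsPositiveMap (QMap a b q γ) → ‖b‖^2 ≤ γ * ‖a‖^2 :=
    pos_imp_ineq a b q γ hγ
  have hcpp := cp_imp_pos (QMap a b q γ)
  exact ⟨⟨hcpp, fun h => hcp (hpi h)⟩,
    ⟨fun h => hsq.mpr (hpi h), fun h => hcpp (hcp (hsq.mp h))⟩⟩
end
end

section
/- For each t ≥ 0 let Φ_t be the excitation-damping map with γ_t = 1 determined by linear maps φ_t : B(H_e)→B(H_e) and ω_t : B(H_e)→B(H_g) and operators B_t ∈ B(H_e), i.e., Φ_t(X) = [[φ_t(X_ee), B_t X_eg],[X_ge B_t†, X_gg + ω_t(X_ee)]]; assume t ↦ φ_t, ω_t, B_t are continuously differentiable. Then Φ_t ∘ Φ_s = Φ_{t+s} for all t, s ≥ 0 and Φ_0 = id if and only if there exist a linear map L : B(H_e)→B(H_e), an operator K ∈ B(H_e), and a linear map ψ : B(H_e)→B(H_g) such that φ_t = exp(t L), B_t = exp(t K), and ω_t = ψ ∘ ∫_0^t exp(τ L) dτ for all t ≥ 0. -/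
open Matrix ComplexOrder
noncomputable section

attribute [local instance] Matrix.linftyOpNormedAddCommGroup Matrix.linftyOpNormedSpace
attribute [local instance] Matrix.linftyOpNormedRing Matrix.linftyOpNormedAlgebra

instance matCLMNormedAddCommGroup {m n : Type*} [Fintype m] [Fintype n] :
    NormedAddCommGroup (Matrix m m ℂ →L[ℂ] Matrix n n ℂ) :=
  ContinuousLinearMap.toNormedAddCommGroup

instance matCLMNormedSpace {m n : Type*} [Fintype m] [Fintype n] :
    NormedSpace ℂ (Matrix m m ℂ →L[ℂ] Matrix n n ℂ) :=
  ContinuousLinearMap.toNormedSpace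

instance matCLMIsTopologicalRing {m : Type*} [Fintype m] :
    IsTopologicalRing (Matrix m m ℂ →L[ℂ] Matrix m m ℂ) :=
  @NonUnitalSeminormedRing.toIsTopologicalRing _
    (ContinuousLinearMap.toSeminormedRing :
      SeminormedRing (Matrix m m ℂ →L[ℂ] Matrix m m ℂ)).toNonUnitalSeminormedRing


set_option maxHeartbeats 1000000
set_option synthInstance.maxHeartbeats 400000

section SemigroupAux
open NormedSpace
variable {A : Type*} [NormedRing A] [NormedAlgebra ℂ A] [CompleteSpace A]

lemma expC_hasDerivAt (L : A) (t : ℝ) :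
    HasDerivAt (fun u : ℝ => exp ((u : ℂ) • L)) (exp ((t : ℂ) • L) * L) t := by
  have h1 : HasDerivAt (fun u : ℂ => exp (u • L)) (exp ((t : ℂ) • L) * L) ((t : ℝ) : ℂ) :=
    hasDerivAt_exp_smul_const L (t : ℂ)
  have h2 : HasDerivAt (fun u : ℝ => (u : ℂ)) 1 t := by
    simpa using (hasDerivAt_id t).ofReal_comp
  exact (h1.scomp t h2).congr_deriv (by simp)

lemma expC_continuous (L : A) : Continuous (fun u : ℝ => exp ((u : ℂ) • L)) :=
  continuous_iff_continuousAt.2 fun t => (expC_hasDerivAt L t).continuousAt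

lemma expC_add (L : A) (t s : ℝ) :
    exp (((t + s : ℝ) : ℂ) • L) = exp ((t : ℂ) • L) * exp ((s : ℂ) • L) := by
  rw [show (((t + s : ℝ)) : ℂ) • L = (t : ℂ) • L + (s : ℂ) • L by push_cast; rw [add_smul]]
  exact NormedSpace.exp_add_of_commute_of_mem_ball (𝕂 := ℂ) (((Commute.refl L).smul_left _).smul_right _)
    ((expSeries_radius_eq_top ℂ A).symm ▸ edist_lt_top _ _) ((expSeries_radius_eq_top ℂ A).symm ▸ edist_lt_top _ _)

lemma integral_expC_add (L : A) (t s : ℝ) :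
    (∫ τ in (0:ℝ)..(t + s), exp ((τ : ℂ) • L)) =
      (∫ τ in (0:ℝ)..s, exp ((τ : ℂ) • L)) +
        (∫ τ in (0:ℝ)..t, exp ((τ : ℂ) • L)) * exp ((s : ℂ) • L) := by
  have hE := expC_continuous L
  have h1 := intervalIntegral.integral_add_adjacent_intervals (μ := MeasureTheory.volume)
    (a := (0:ℝ)) (b := s) (c := t + s)
    (hE.intervalIntegrable 0 s) (hE.intervalIntegrable s (t + s))
  have h2 : (∫ τ in s..(t + s), exp ((τ : ℂ) • L)) =
      ∫ τ in (0:ℝ)..t, exp (((τ + s : ℝ) : ℂ) • L) := by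
    rw [intervalIntegral.integral_comp_add_right (fun τ : ℝ => exp ((τ : ℂ) • L)) s, zero_add]
  have h3 : (∫ τ in (0:ℝ)..t, exp (((τ + s : ℝ) : ℂ) • L)) =
      ∫ τ in (0:ℝ)..t, exp ((τ : ℂ) • L) * exp ((s : ℂ) • L) := by
    simp_rw [expC_add]
  have h4 : (∫ τ in (0:ℝ)..t, exp ((τ : ℂ) • L) * exp ((s : ℂ) • L)) =
      (∫ τ in (0:ℝ)..t, exp ((τ : ℂ) • L)) * exp ((s : ℂ) • L) := by
    have := ((ContinuousLinearMap.mul ℂ A).flip (exp ((s : ℂ) • L))).intervalIntegral_comp_comm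
      (μ := MeasureTheory.volume) (hE.intervalIntegrable 0 t)
    simpa using this
  rw [← h1, h2, h3, h4]

lemma semigroup_eq_exp (f : ℝ → A) (K : A)
    (hcont : ContinuousOn f (Set.Ici 0))
    (hK : HasDerivWithinAt f K (Set.Ici 0) 0)
    (hmul : ∀ t ∈ Set.Ici (0:ℝ), ∀ s ∈ Set.Ici (0:ℝ), f (t + s) = f t * f s)
    (h0 : f 0 = 1) :
    ∀ t ∈ Set.Ici (0:ℝ), f t = exp ((t : ℂ) • K) := by
  have hd : ∀ t : ℝ, 0 ≤ t → HasDerivWithinAt f (K * f t) (Set.Ici t) t := by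
    intro t ht
    have hmap : Set.MapsTo (fun s : ℝ => s - t) (Set.Ici t) (Set.Ici 0) := fun s hs => by
      simp only [Set.mem_Ici] at *; linarith
    have h1 : HasDerivWithinAt (fun s : ℝ => s - t) 1 (Set.Ici t) t :=
      ((hasDerivAt_id t).sub_const t).hasDerivWithinAt
    have h3 := (hK.scomp_of_eq t h1 hmap (by simp)).mul_const (f t)
    have h4 : HasDerivWithinAt (fun s : ℝ => f (s - t) * f t) (K * f t) (Set.Ici t) t := by
      simpa using h3
    refine h4.congr (fun s hs => ?_) (by simp [h0])
    · have := hmul (s - t) (by simp only [Set.mem_Ici] at *; linarith) t ht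
      rw [sub_add_cancel] at this
      exact this
  intro b hb
  have hgd : ∀ x ∈ Set.Ico (0:ℝ) b,
      HasDerivWithinAt (fun u : ℝ => exp ((u : ℂ) • (-K)) * f u) 0 (Set.Ici x) x := by
    intro x hx
    have h1 := (expC_hasDerivAt (-K) x).hasDerivWithinAt (s := Set.Ici x)
    have h2 := h1.mul (hd x hx.1)
    convert h2 using 1
    · rfl
    · noncomm_ring
  have hgc : ContinuousOn (fun u : ℝ => exp ((u : ℂ) • (-K)) * f u) (Set.Icc 0 b) :=
    ((expC_continuous (-K)).continuousOn).mul (hcont.mono (fun x hx => hx.1))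
  have hconst := constant_of_has_deriv_right_zero hgc hgd b ⟨hb, le_refl b⟩
  have hb1 : exp ((b : ℂ) • (-K)) * f b = 1 := by
    simpa [h0] using hconst
  have hcomm : Commute ((b : ℂ) • K) ((b : ℂ) • (-K)) :=
    (((Commute.refl K).neg_right).smul_left _).smul_right _
  have hEE : exp ((b : ℂ) • K) * exp ((b : ℂ) • (-K)) = 1 := by
    rw [← NormedSpace.exp_add_of_commute_of_mem_ball (𝕂 := ℂ) hcomm ((expSeries_radius_eq_top ℂ A).symm ▸ edist_lt_top _ _)
      ((expSeries_radius_eq_top ℂ A).symm ▸ edist_lt_top _ _), ← smul_add, add_neg_cancel, smul_zero, NormedSpace.exp_zero]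
  calc f b = 1 * f b := (one_mul _).symm
    _ = exp ((b : ℂ) • K) * exp ((b : ℂ) • (-K)) * f b := by rw [hEE]
    _ = exp ((b : ℂ) • K) * (exp ((b : ℂ) • (-K)) * f b) := by rw [mul_assoc]
    _ = exp ((b : ℂ) • K) := by rw [hb1, mul_one]

end SemigroupAux

section CocycleAux
open NormedSpace
variable {E G : Type*} [NormedAddCommGroup E] [NormedSpace ℂ E] [CompleteSpace E]
  [NormedAddCommGroup G] [NormedSpace ℂ G] [CompleteSpace G]

lemma cocycle_eq_int (φf : ℝ → (E →L[ℂ] E)) (w : ℝ → (E →L[ℂ] G)) (L : E →L[ℂ] E)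
    (ψ : E →L[ℂ] G)
    (hφ : ∀ t ∈ Set.Ici (0:ℝ), φf t = exp ((t : ℂ) • L))
    (hwc : ContinuousOn w (Set.Ici 0))
    (hψ : HasDerivWithinAt w ψ (Set.Ici 0) 0)
    (hco : ∀ t ∈ Set.Ici (0:ℝ), ∀ s ∈ Set.Ici (0:ℝ),
      w (t + s) = (w t).comp (φf s) + w s)
    (h0 : w 0 = 0) :
    ∀ t ∈ Set.Ici (0:ℝ), w t = ψ.comp (∫ τ in (0:ℝ)..t, exp ((τ : ℂ) • L)) := by
  set I : ℝ → (E →L[ℂ] E) := fun t => ∫ τ in (0:ℝ)..t, exp ((τ : ℂ) • L) with hIdef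
  have hI : ∀ t : ℝ, HasDerivAt I (exp ((t : ℂ) • L)) t := fun t =>
    intervalIntegral.integral_hasDerivAt_right ((expC_continuous L).intervalIntegrable 0 t)
      ((expC_continuous L).stronglyMeasurableAtFilter _ _) (expC_continuous L).continuousAt
  set Q : (E →L[ℂ] E) →L[ℂ] (E →L[ℂ] G) := ContinuousLinearMap.compL ℂ E E G ψ with hQdef
  set D : ℝ → (E →L[ℂ] G) := fun t => w t - Q (I t) with hDdef
  have hDd : ∀ b : ℝ, 0 ≤ b → ∀ x ∈ Set.Ico (0:ℝ) b, HasDerivWithinAt D 0 (Set.Ici x) x := by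
    intro b hb x hx
    set P : (E →L[ℂ] G) →L[ℂ] (E →L[ℂ] G) :=
      (ContinuousLinearMap.compL ℂ E E G).flip (φf x) with hPdef
    have hmap : Set.MapsTo (fun s : ℝ => s - x) (Set.Ici x) (Set.Ici 0) := fun s hs => by
      simp only [Set.mem_Ici] at *; linarith
    have h1 : HasDerivWithinAt (fun s : ℝ => w (s - x)) ψ (Set.Ici x) x := by
      exact (hψ.scomp_of_eq x (((hasDerivAt_id x).sub_const x).hasDerivWithinAt) hmap
        (by simp)).congr_deriv (by simp)
    have h2 := ((P.hasFDerivAt.restrictScalars ℝ).comp_hasDerivWithinAt x h1).add_const (w x)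
    have h3 : HasDerivWithinAt w (P ψ) (Set.Ici x) x := by
      refine (h2.congr (fun s hs => ?_) ?_).congr_deriv (by simp)
      · have := hco (s - x) (hmap hs) x hx.1
        rw [sub_add_cancel] at this
        simpa [Function.comp, hPdef] using this
      · simpa [Function.comp, hPdef] using (by
          have := hco 0 Set.self_mem_Ici x hx.1
          rw [zero_add] at this
          simpa [h0] using this : w x = (w 0).comp (φf x) + w x)
    have h4 : HasDerivWithinAt (fun t => Q (I t)) (Q (exp ((x : ℂ) • L))) (Set.Ici x) x :=
      ((Q.hasFDerivAt.restrictScalars ℝ).comp_hasDerivAt x (hI x)).hasDerivWithinAt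
    have h5 := h3.sub h4
    have h6 : P ψ - Q (exp ((x : ℂ) • L)) = 0 := by
      have : P ψ = ψ.comp (φf x) := rfl
      rw [this, hφ x hx.1]
      simp [hQdef]
    rw [h6] at h5
    exact h5
  have hIc : Continuous I := continuous_iff_continuousAt.2 fun t => (hI t).continuousAt
  intro b hb
  have hDc : ContinuousOn D (Set.Icc 0 b) :=
    ((hwc.mono (fun y hy => hy.1)).sub ((Q.continuous.comp hIc).continuousOn))
  have hconst := constant_of_has_deriv_right_zero hDc (hDd b hb) b ⟨hb, le_refl b⟩
  have hD0 : D 0 = 0 := by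
    simp [hDdef, hIdef, h0, intervalIntegral.integral_same]
  rw [hD0] at hconst
  have hwb : w b = Q (I b) := sub_eq_zero.mp hconst
  rw [hwb]
  rfl

end CocycleAux

open NormedSpace in
/-- a continuously differentiable family of excitation-damping maps
(with `γ_t = 1`) satisfies `Φ_t ∘ Φ_s = Φ_{t+s}` (t,s ≥ 0) and `Φ_0 = id` iff there are a
linear map `L`, an operator `K` and a linear map `ψ` with `φ_t = exp(tL)`,
`B_t = exp(tK)` and `ω_t = ψ ∘ ∫_0^t exp(τL) dτ` for all `t ≥ 0`. -/
theorem stmt_16 {de dg : ℕ} (hde : 0 < de) (hdg : 0 < dg)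
    (φ : ℝ → (Matrix (Fin de) (Fin de) ℂ →L[ℂ] Matrix (Fin de) (Fin de) ℂ))
    (ω : ℝ → (Matrix (Fin de) (Fin de) ℂ →L[ℂ] Matrix (Fin dg) (Fin dg) ℂ))
    (B : ℝ → Matrix (Fin de) (Fin de) ℂ)
    (hφ : ContDiffOn ℝ 1 φ (Set.Ici 0))
    (hω : ContDiffOn ℝ 1 ω (Set.Ici 0))
    (hB : ContDiffOn ℝ 1 B (Set.Ici 0)) :
    ((∀ t ∈ Set.Ici (0:ℝ), ∀ s ∈ Set.Ici (0:ℝ),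
        ∀ X : Matrix (Fin de ⊕ Fin dg) (Fin de ⊕ Fin dg) ℂ,
          EDMap ⇑(φ t) ⇑(ω t) (B t) 1 (EDMap ⇑(φ s) ⇑(ω s) (B s) 1 X) =
            EDMap ⇑(φ (t + s)) ⇑(ω (t + s)) (B (t + s)) 1 X) ∧
      (∀ X : Matrix (Fin de ⊕ Fin dg) (Fin de ⊕ Fin dg) ℂ,
        EDMap ⇑(φ 0) ⇑(ω 0) (B 0) 1 X = X)) ↔
    (∃ (L : Matrix (Fin de) (Fin de) ℂ →L[ℂ] Matrix (Fin de) (Fin de) ℂ)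
        (K : Matrix (Fin de) (Fin de) ℂ)
        (ψ : Matrix (Fin de) (Fin de) ℂ →L[ℂ] Matrix (Fin dg) (Fin dg) ℂ),
      ∀ t ∈ Set.Ici (0:ℝ),
        φ t = NormedSpace.exp ((t : ℂ) • L) ∧
        B t = NormedSpace.exp (t • K) ∧
        ω t = ψ.comp (∫ τ in (0:ℝ)..t, NormedSpace.exp ((τ : ℂ) • L))) := by
  have hsmulK : ∀ (t : ℝ) (K : Matrix (Fin de) (Fin de) ℂ), (t : ℂ) • K = t • K := by
    intro t K
    ext i j
    simp [Matrix.smul_apply, Complex.real_smul, smul_eq_mul]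
  letI : NormedRing (Matrix (Fin de) (Fin de) ℂ →L[ℂ] Matrix (Fin de) (Fin de) ℂ) := ContinuousLinearMap.toNormedRing
  letI : NormedAlgebra ℂ (Matrix (Fin de) (Fin de) ℂ →L[ℂ] Matrix (Fin de) (Fin de) ℂ) := ContinuousLinearMap.toNormedAlgebra
  haveI : ProperSpace (Matrix (Fin de) (Fin de) ℂ →L[ℂ] Matrix (Fin de) (Fin de) ℂ) :=
    @FiniteDimensional.proper ℂ _ _ _ _ _ ContinuousLinearMap.finiteDimensional
  haveI : CompleteSpace (Matrix (Fin de) (Fin de) ℂ →L[ℂ] Matrix (Fin dg) (Fin dg) ℂ) := FiniteDimensional.complete ℂ _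
  haveI : ContinuousSMul ℝ (Matrix (Fin de) (Fin de) ℂ →L[ℂ] Matrix (Fin de) (Fin de) ℂ) := NormedSpace.toIsBoundedSMul.continuousSMul
  haveI : ContinuousSMul ℝ (Matrix (Fin de) (Fin de) ℂ →L[ℂ] Matrix (Fin dg) (Fin dg) ℂ) := NormedSpace.toIsBoundedSMul.continuousSMul
  constructor
  · rintro ⟨hsemi, hid⟩
    have hid1 : ∀ Y : Matrix (Fin de) (Fin de) ℂ, (φ 0) Y = Y ∧ (ω 0) Y = 0 := by
      intro Y
      have h := hid (fromBlocks Y 0 0 0)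
      simp only [EDMap, Matrix.toBlocks_fromBlocks₁₁, Matrix.toBlocks_fromBlocks₁₂,
        Matrix.toBlocks_fromBlocks₂₁, Matrix.toBlocks_fromBlocks₂₂, Matrix.mul_zero,
        Matrix.zero_mul, smul_zero, zero_add, Complex.ofReal_one, one_smul] at h
      rw [Matrix.fromBlocks_inj] at h
      exact ⟨h.1, h.2.2.2⟩
    have hφ0 : φ 0 = 1 := ContinuousLinearMap.ext fun Y => (hid1 Y).1
    have hω0 : ω 0 = 0 := ContinuousLinearMap.ext fun Y => (hid1 Y).2
    have hmatext : ∀ P Q : Matrix (Fin de) (Fin de) ℂ,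
        (∀ Y : Matrix (Fin de) (Fin dg) ℂ, P * Y = Q * Y) → P = Q := by
      intro P Q hPQ
      ext i c
      have h := congrFun (congrFun (hPQ (Matrix.of fun k (_ : Fin dg) =>
        if k = c then (1:ℂ) else 0)) i) ⟨0, hdg⟩
      simpa [Matrix.mul_apply, mul_ite, mul_one, mul_zero] using h
    have hB0 : B 0 = 1 := by
      refine hmatext _ _ fun Y => ?_
      have h := hid (fromBlocks 0 Y 0 0)
      simp only [EDMap, Matrix.toBlocks_fromBlocks₁₁, Matrix.toBlocks_fromBlocks₁₂,
        Matrix.toBlocks_fromBlocks₂₁, Matrix.toBlocks_fromBlocks₂₂,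
        Matrix.zero_mul, map_zero, smul_zero, zero_add, add_zero] at h
      rw [Matrix.fromBlocks_inj] at h
      rw [h.2.1, Matrix.one_mul]
    have hkey : ∀ t ∈ Set.Ici (0:ℝ), ∀ s ∈ Set.Ici (0:ℝ), ∀ Y : Matrix (Fin de) (Fin de) ℂ,
        (φ t) ((φ s) Y) = (φ (t + s)) Y ∧
          (ω s) Y + (ω t) ((φ s) Y) = (ω (t + s)) Y := by
      intro t ht s hs Y
      have h := hsemi t ht s hs (fromBlocks Y 0 0 0)
      simp only [EDMap, Matrix.toBlocks_fromBlocks₁₁, Matrix.toBlocks_fromBlocks₁₂,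
        Matrix.toBlocks_fromBlocks₂₁, Matrix.toBlocks_fromBlocks₂₂, Matrix.mul_zero,
        Matrix.zero_mul, smul_zero, zero_add, Complex.ofReal_one, one_smul] at h
      rw [Matrix.fromBlocks_inj] at h
      exact ⟨h.1, h.2.2.2⟩
    have hBkey : ∀ t ∈ Set.Ici (0:ℝ), ∀ s ∈ Set.Ici (0:ℝ), B t * B s = B (t + s) := by
      intro t ht s hs
      refine hmatext _ _ fun Y => ?_
      have h := hsemi t ht s hs (fromBlocks 0 Y 0 0)
      simp only [EDMap, Matrix.toBlocks_fromBlocks₁₁, Matrix.toBlocks_fromBlocks₁₂,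
        Matrix.toBlocks_fromBlocks₂₁, Matrix.toBlocks_fromBlocks₂₂,
        Matrix.zero_mul, map_zero, smul_zero, zero_add, add_zero] at h
      rw [Matrix.fromBlocks_inj] at h
      rw [Matrix.mul_assoc]
      exact h.2.1
    have hφd : HasDerivWithinAt φ (derivWithin φ (Set.Ici 0) 0) (Set.Ici 0) 0 :=
      (hφ.differentiableOn one_ne_zero 0 Set.self_mem_Ici).hasDerivWithinAt
    have hBd : HasDerivWithinAt B (derivWithin B (Set.Ici 0) 0) (Set.Ici 0) 0 :=
      (hB.differentiableOn one_ne_zero 0 Set.self_mem_Ici).hasDerivWithinAt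
    have hωd : HasDerivWithinAt ω (derivWithin ω (Set.Ici 0) 0) (Set.Ici 0) 0 :=
      (hω.differentiableOn one_ne_zero 0 Set.self_mem_Ici).hasDerivWithinAt
    have hφexp : ∀ t ∈ Set.Ici (0:ℝ), φ t = exp ((t : ℂ) • derivWithin φ (Set.Ici 0) 0) :=
      semigroup_eq_exp φ _ hφ.continuousOn hφd
        (fun t ht s hs => ContinuousLinearMap.ext fun Y => by
          exact ((hkey t ht s hs Y).1).symm) hφ0
    have hBexp : ∀ t ∈ Set.Ici (0:ℝ), B t = exp ((t : ℂ) • derivWithin B (Set.Ici 0) 0) :=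
      semigroup_eq_exp B _ hB.continuousOn hBd
        (fun t ht s hs => (hBkey t ht s hs).symm) hB0
    have hco : ∀ t ∈ Set.Ici (0:ℝ), ∀ s ∈ Set.Ici (0:ℝ),
        ω (t + s) = (ω t).comp (φ s) + ω s := by
      intro t ht s hs
      refine ContinuousLinearMap.ext fun Y => ?_
      have h := (hkey t ht s hs Y).2
      simp only [ContinuousLinearMap.add_apply, ContinuousLinearMap.comp_apply]
      rw [← h]
      exact (add_comm _ _)
    have hωint := cocycle_eq_int φ ω _ _ hφexp hω.continuousOn hωd hco hω0
    exact ⟨derivWithin φ (Set.Ici 0) 0, derivWithin B (Set.Ici 0) 0,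
      derivWithin ω (Set.Ici 0) 0, fun t ht =>
        ⟨hφexp t ht, by rw [hBexp t ht, hsmulK], hωint t ht⟩⟩
  · rintro ⟨L, K, ψ, h⟩
    constructor
    · intro t ht s hs X
      obtain ⟨hφt, hBt, hωt⟩ := h t ht
      obtain ⟨hφs, hBs, hωs⟩ := h s hs
      obtain ⟨hφts, hBts, hωts⟩ := h (t + s)
        (by simp only [Set.mem_Ici] at *; linarith)
      have hBmul : B (t + s) = B t * B s := by
        rw [hBt, hBs, hBts, ← hsmulK t K, ← hsmulK s K, ← hsmulK (t + s) K]
        exact expC_add K t s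
      have hφmul : φ (t + s) = φ t * φ s := by
        rw [hφt, hφs, hφts]
        exact expC_add L t s
      simp only [EDMap, Matrix.toBlocks_fromBlocks₁₁, Matrix.toBlocks_fromBlocks₁₂,
        Matrix.toBlocks_fromBlocks₂₁, Matrix.toBlocks_fromBlocks₂₂]
      rw [Matrix.fromBlocks_inj]
      refine ⟨?_, ?_, ?_, ?_⟩
      · rw [hφmul]; rfl
      · rw [hBmul, Matrix.mul_assoc]
      · rw [hBmul, Matrix.conjTranspose_mul, Matrix.mul_assoc]
      · simp only [Complex.ofReal_one, one_smul]
        rw [hωt, hωs, hωts, hφs, add_assoc]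
        congr 1
        rw [show (∫ τ in (0:ℝ)..(t + s), exp ((τ : ℂ) • L)) = _ from integral_expC_add L t s]
        simp only [ContinuousLinearMap.comp_apply, ContinuousLinearMap.add_apply,
          ContinuousLinearMap.mul_apply, map_add]
        exact (map_add ψ _ _).symm
    · intro X
      obtain ⟨hφ0, hB0, hω0⟩ := h 0 Set.self_mem_Ici
      rw [hφ0, hB0, hω0]
      have e1 : ((0:ℝ) : ℂ) • L = 0 := by
        simp only [Complex.ofReal_zero]
        exact zero_smul ℂ L
      have e2 : (0:ℝ) • K = 0 := zero_smul _ _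
      rw [e1, e2, exp_zero, exp_zero]
      simp only [EDMap, Complex.ofReal_one,
        intervalIntegral.integral_same, ContinuousLinearMap.comp_zero,
        ContinuousLinearMap.comp_apply, map_zero,
        ContinuousLinearMap.one_apply, ContinuousLinearMap.zero_apply, Matrix.one_mul,
        Matrix.conjTranspose_one, Matrix.mul_one, one_smul, add_zero]
      convert Matrix.fromBlocks_toBlocks X using 2
      exact (congrArg (X.toBlocks₂₂ + ·) (map_zero ψ)).trans (add_zero _)
end
end

section
/- For each t ≥ 0 let Φ_t be the excitation-damping map with γ_t = 1 determined by φ_t = exp(tL), B_t = exp(tK), and ω_t = ψ ∘ ∫_0^t exp(τL) dτ, where L(X) = −i[H,X] − ½{G,X} + Σ_{μ=1}^r (F_μ X F_μ† − ½{F_μ† F_μ, X}) with H = H†, G = G† ⪰ 0, K = −iH − ½(G + Σ_{μ=1}^r F_μ† F_μ) − (iε + κ/2) I_e − √κ Σ_{μ=1}^r c_μ F_μ with ε ∈ ℝ, κ ≥ 0, Σ_μ |c_μ|² ≤ 1, and ψ : B(H_e)→B(H_g) completely positive. Then Φ_t is trace preserving for all t ≥ 0 (hence a completely positive trace preserving semigroup)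 if and only if tr ψ(X) = tr(G X) for all X ∈ B(H_e). -/
open Matrix ComplexOrder
noncomputable section

attribute [local instance] Matrix.linftyOpNormedAddCommGroup Matrix.linftyOpNormedSpace
attribute [local instance] Matrix.linftyOpNormedRing Matrix.linftyOpNormedAlgebra

/-- The topology of the `linfty` operator norm on matrices (equal to the product topology). -/
abbrev matrixLinftyTopology (m n : Type*) [Fintype m] [Fintype n] :
    TopologicalSpace (Matrix m n ℂ) :=
  (Matrix.linftyOpNormedAddCommGroup : NormedAddCommGroup (Matrix m n ℂ)).toUniformSpace.toTopologicalSpace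

attribute [local instance] matrixLinftyTopology

/-- The GKLS generator `L(X) = −i[H,X] − ½{G,X} + Σ_μ (F_μ X F_μ† − ½{F_μ† F_μ, X})`. -/
def gklsL {de : ℕ} (r : ℕ) (H G : Matrix (Fin de) (Fin de) ℂ)
    (F : Fin r → Matrix (Fin de) (Fin de) ℂ)
    (X : Matrix (Fin de) (Fin de) ℂ) : Matrix (Fin de) (Fin de) ℂ :=
  -(Complex.I • (H * X - X * H)) - (1 / 2 : ℂ) • (G * X + X * G) +
    ∑ μ, (F μ * X * (F μ)ᴴ - (1 / 2 : ℂ) • ((F μ)ᴴ * F μ * X + X * ((F μ)ᴴ * F μ)))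

/-- The operator `K = −iH − ½(G + Σ F_μ† F_μ) − (iε + κ/2) I − √κ Σ c_μ F_μ`. -/
def gklsK {de : ℕ} (r : ℕ) (H G : Matrix (Fin de) (Fin de) ℂ)
    (F : Fin r → Matrix (Fin de) (Fin de) ℂ) (ε κ : ℝ) (c : Fin r → ℂ) :
    Matrix (Fin de) (Fin de) ℂ :=
  -(Complex.I • H) - (1 / 2 : ℂ) • (G + ∑ μ, (F μ)ᴴ * F μ) -
    (Complex.I * (ε : ℂ) + (κ : ℂ) / 2) • (1 : Matrix (Fin de) (Fin de) ℂ) -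
    (Real.sqrt κ : ℂ) • ∑ μ, c μ • F μ

/-! ### Auxiliary results -/

lemma trace_gklsL {de : ℕ} (r : ℕ) (H G : Matrix (Fin de) (Fin de) ℂ)
    (F : Fin r → Matrix (Fin de) (Fin de) ℂ) (X : Matrix (Fin de) (Fin de) ℂ) :
    (gklsL r H G F X).trace = -((G * X).trace) := by
  have hsum : ∀ μ : Fin r,
      (F μ * X * (F μ)ᴴ - (1 / 2 : ℂ) • ((F μ)ᴴ * F μ * X + X * ((F μ)ᴴ * F μ))).trace = 0 := by
    intro μ
    rw [Matrix.trace_sub, Matrix.trace_smul, Matrix.trace_add,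
      Matrix.trace_mul_comm (F μ * X) (F μ)ᴴ, ← mul_assoc,
      Matrix.trace_mul_comm X ((F μ)ᴴ * F μ)]
    ring_nf
  simp only [gklsL, Matrix.trace_add, Matrix.trace_sub, Matrix.trace_neg, Matrix.trace_smul,
    Matrix.trace_sum, hsum, Finset.sum_const_zero, add_zero,
    Matrix.trace_mul_comm X H, Matrix.trace_mul_comm X G, smul_eq_mul]
  ring

lemma trace_fromBlocks' {m n R : Type*} [Fintype m] [Fintype n] [AddCommMonoid R]
    (A : Matrix m m R) (B : Matrix m n R) (C : Matrix n m R) (D : Matrix n n R) :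
    (fromBlocks A B C D).trace = A.trace + D.trace := by
  simp [Matrix.trace, Matrix.diag, fromBlocks, Fintype.sum_sum_type]

def trCLM (d : ℕ) : Matrix (Fin d) (Fin d) ℂ →L[ℂ] ℂ :=
  LinearMap.toContinuousLinearMap (Matrix.traceLinearMap (Fin d) ℂ ℂ)

lemma trCLM_apply {d : ℕ} (X : Matrix (Fin d) (Fin d) ℂ) : trCLM d X = X.trace := rfl

lemma exp_conv {de : ℕ} (L : Matrix (Fin de) (Fin de) ℂ →L[ℂ] Matrix (Fin de) (Fin de) ℂ)
    (s : ℝ) : NormedSpace.exp ((s : ℂ) • L) = NormedSpace.exp (s • L) := by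
  congr 1

set_option maxHeartbeats 1000000 in
lemma stmt18_deriv {de dg : ℕ}
    (ψ : Matrix (Fin de) (Fin de) ℂ →L[ℂ] Matrix (Fin dg) (Fin dg) ℂ)
    (L : Matrix (Fin de) (Fin de) ℂ →L[ℂ] Matrix (Fin de) (Fin de) ℂ)
    (A : Matrix (Fin de) (Fin de) ℂ) (t : ℝ) :
    HasDerivAt (fun u : ℝ =>
        ((NormedSpace.exp (u • L)) A).trace +
          (ψ ((∫ τ in (0:ℝ)..u, NormedSpace.exp (τ • L)) A)).trace)
      ((L (NormedSpace.exp (t • L) A)).trace + (ψ (NormedSpace.exp (t • L) A)).trace) t := by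
  have hcont : Continuous (fun u : ℝ => NormedSpace.exp (u • L)) :=
    continuous_iff_continuousAt.2 fun u => (hasDerivAt_exp_smul_const' L u).continuousAt
  let apA : (Matrix (Fin de) (Fin de) ℂ →L[ℂ] Matrix (Fin de) (Fin de) ℂ) →L[ℂ]
      Matrix (Fin de) (Fin de) ℂ := ContinuousLinearMap.apply ℂ (Matrix (Fin de) (Fin de) ℂ) A
  let g1 : (Matrix (Fin de) (Fin de) ℂ →L[ℂ] Matrix (Fin de) (Fin de) ℂ) →L[ℝ] ℂ :=
    ((trCLM de).comp apA).restrictScalars ℝ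
  let g2 : (Matrix (Fin de) (Fin de) ℂ →L[ℂ] Matrix (Fin de) (Fin de) ℂ) →L[ℝ] ℂ :=
    ((trCLM dg).comp (ψ.comp apA)).restrictScalars ℝ
  have h1' : HasDerivAt (fun u : ℝ => NormedSpace.exp (u • L))
      (L * NormedSpace.exp (t • L)) t := hasDerivAt_exp_smul_const' L t
  have h1 : HasDerivAt (fun u : ℝ => g1 (NormedSpace.exp (u • L)))
      (g1 (L * NormedSpace.exp (t • L))) t := g1.hasFDerivAt.comp_hasDerivAt t h1'
  have h2' : HasDerivAt (fun u : ℝ => ∫ τ in (0:ℝ)..u, NormedSpace.exp (τ • L))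
      (NormedSpace.exp (t • L)) t :=
    intervalIntegral.integral_hasDerivAt_right (hcont.intervalIntegrable 0 t)
      (hcont.stronglyMeasurableAtFilter _ _) hcont.continuousAt
  have h2 : HasDerivAt (fun u : ℝ => g2 (∫ τ in (0:ℝ)..u, NormedSpace.exp (τ • L)))
      (g2 (NormedSpace.exp (t • L))) t := g2.hasFDerivAt.comp_hasDerivAt t h2'
  have hadd := h1.add h2
  convert hadd using 2
  all_goals rfl

/-- The scalar-valued function whose constancy expresses trace preservation. -/
def tpFun {de dg : ℕ}
    (ψ : Matrix (Fin de) (Fin de) ℂ →L[ℂ] Matrix (Fin dg) (Fin dg) ℂ)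
    (L : Matrix (Fin de) (Fin de) ℂ →L[ℂ] Matrix (Fin de) (Fin de) ℂ)
    (A : Matrix (Fin de) (Fin de) ℂ) (u : ℝ) : ℂ :=
  ((NormedSpace.exp (u • L)) A).trace +
    (ψ ((∫ τ in (0:ℝ)..u, NormedSpace.exp (τ • L)) A)).trace

lemma tpFun_zero {de dg : ℕ}
    (ψ : Matrix (Fin de) (Fin de) ℂ →L[ℂ] Matrix (Fin dg) (Fin dg) ℂ)
    (L : Matrix (Fin de) (Fin de) ℂ →L[ℂ] Matrix (Fin de) (Fin de) ℂ)
    (A : Matrix (Fin de) (Fin de) ℂ) : tpFun ψ L A 0 = A.trace := by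
  have h0 : (0:ℝ) • L = 0 := zero_smul ℝ L
  simp [tpFun, h0, NormedSpace.exp_zero, intervalIntegral.integral_same,
    ContinuousLinearMap.one_apply]

set_option maxHeartbeats 1000000 in
lemma stmt18_deriv' {de dg : ℕ} (r : ℕ) (H G : Matrix (Fin de) (Fin de) ℂ)
    (F : Fin r → Matrix (Fin de) (Fin de) ℂ)
    (ψ : Matrix (Fin de) (Fin de) ℂ →L[ℂ] Matrix (Fin dg) (Fin dg) ℂ)
    (L : Matrix (Fin de) (Fin de) ℂ →L[ℂ] Matrix (Fin de) (Fin de) ℂ)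
    (hL : ∀ X, L X = gklsL r H G F X)
    (A : Matrix (Fin de) (Fin de) ℂ) (t : ℝ) :
    HasDerivAt (tpFun ψ L A)
      ((ψ (NormedSpace.exp (t • L) A)).trace -
        (G * NormedSpace.exp (t • L) A).trace) t := by
  have h := stmt18_deriv ψ L A t
  have : (L (NormedSpace.exp (t • L) A)).trace +
      (ψ (NormedSpace.exp (t • L) A)).trace =
      (ψ (NormedSpace.exp (t • L) A)).trace -
        (G * NormedSpace.exp (t • L) A).trace := by
    rw [hL, trace_gklsL]; ring
  rw [this] at h
  exact h

/-- the completely positive excitation-damping semigroup determined by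
GKLS data `(H, G, F, ε, κ, c, ψ)` is trace preserving for all `t ≥ 0` iff
`tr ψ(X) = tr(G X)` for all `X`. -/
theorem stmt_18 {de dg : ℕ} (hde : 0 < de) (hdg : 0 < dg) (r : ℕ)
    (H G : Matrix (Fin de) (Fin de) ℂ)
    (F : Fin r → Matrix (Fin de) (Fin de) ℂ)
    (hH : H.IsHermitian) (hG : G.PosSemidef)
    (ε κ : ℝ) (hκ : 0 ≤ κ) (c : Fin r → ℂ) (hc : (∑ μ, ‖c μ‖ ^ 2) ≤ 1)
    (ψ : Matrix (Fin de) (Fin de) ℂ →L[ℂ] Matrix (Fin dg) (Fin dg) ℂ)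
    (hψ : IsCompletelyPositive ⇑ψ)
    (L : Matrix (Fin de) (Fin de) ℂ →L[ℂ] Matrix (Fin de) (Fin de) ℂ)
    (hL : ∀ X, L X = gklsL r H G F X) :
    (∀ t ∈ Set.Ici (0:ℝ),
        ∀ X : Matrix (Fin de ⊕ Fin dg) (Fin de ⊕ Fin dg) ℂ,
          (EDMap ⇑(NormedSpace.exp ((t : ℂ) • L))
              ⇑(ψ.comp (∫ τ in (0:ℝ)..t, NormedSpace.exp ((τ : ℂ) • L)))
              (NormedSpace.exp (t • gklsK r H G F ε κ c)) 1 X).trace = X.trace) ↔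
      (∀ X : Matrix (Fin de) (Fin de) ℂ, (ψ X).trace = (G * X).trace) := by
  have hconv : ∀ s : ℝ, NormedSpace.exp ((s : ℂ) • L) = NormedSpace.exp (s • L) :=
    exp_conv L
  -- the reduced scalar form of the trace-preservation condition
  have key : (∀ t ∈ Set.Ici (0:ℝ),
      ∀ X : Matrix (Fin de ⊕ Fin dg) (Fin de ⊕ Fin dg) ℂ,
        (EDMap ⇑(NormedSpace.exp ((t : ℂ) • L))
            ⇑(ψ.comp (∫ τ in (0:ℝ)..t, NormedSpace.exp ((τ : ℂ) • L)))
            (NormedSpace.exp (t • gklsK r H G F ε κ c)) 1 X).trace = X.trace) ↔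
      (∀ t ∈ Set.Ici (0:ℝ), ∀ A : Matrix (Fin de) (Fin de) ℂ, tpFun ψ L A t = A.trace) := by
    simp only [hconv]
    constructor
    · intro hP t ht A
      have := hP t ht (fromBlocks A 0 0 0)
      simpa [EDMap, tpFun, trace_fromBlocks', Matrix.toBlocks_fromBlocks₁₁,
        Matrix.toBlocks_fromBlocks₁₂, Matrix.toBlocks_fromBlocks₂₁,
        Matrix.toBlocks_fromBlocks₂₂, Matrix.trace_add] using this
    · intro hQ t ht X
      have hX : X.trace = X.toBlocks₁₁.trace + X.toBlocks₂₂.trace := by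
        conv_lhs => rw [← Matrix.fromBlocks_toBlocks X]
        rw [trace_fromBlocks']
      have h := hQ t ht X.toBlocks₁₁
      simp only [tpFun, ContinuousLinearMap.comp_apply] at h
      simp only [EDMap, trace_fromBlocks', Matrix.trace_add, Complex.ofReal_one, one_smul,
        ContinuousLinearMap.comp_apply]
      rw [hX]
      linear_combination h
  rw [key]
  constructor
  · -- trace preservation ⟹ trace condition
    intro hP A
    have hd := stmt18_deriv' r H G F ψ L hL A 0
    have hZ : NormedSpace.exp ((0:ℝ) • L) A = A := by
      have h0 : (0:ℝ) • L = 0 := zero_smul ℝ L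
      rw [h0, NormedSpace.exp_zero]
      rfl
    rw [hZ] at hd
    have hconst : HasDerivWithinAt (tpFun ψ L A) 0 (Set.Ici 0) 0 := by
      refine (hasDerivWithinAt_const (0:ℝ) (Set.Ici (0:ℝ)) (A.trace : ℂ)).congr
        (fun y hy => hP y hy A) (hP 0 Set.self_mem_Ici A)
    have h1 := hd.hasDerivWithinAt.derivWithin (uniqueDiffOn_Ici (0:ℝ) 0 Set.self_mem_Ici)
    have h2 := hconst.derivWithin (uniqueDiffOn_Ici (0:ℝ) 0 Set.self_mem_Ici)
    have : (ψ A).trace - (G * A).trace = 0 := by rw [← h1, h2]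
    exact sub_eq_zero.mp this
  · -- trace condition ⟹ trace preservation
    intro hT t ht A
    have hder : ∀ u : ℝ, HasDerivAt (tpFun ψ L A) 0 u := by
      intro u
      have hd := stmt18_deriv' r H G F ψ L hL A u
      rwa [hT, sub_self] at hd
    have hconstf : tpFun ψ L A t = tpFun ψ L A 0 :=
      is_const_of_deriv_eq_zero (fun u => (hder u).differentiableAt)
        (fun u => (hder u).deriv) t 0
    rw [hconstf, tpFun_zero]
end
end
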